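/- arXiv:2311.09842 — 6 statements merged into one kernel-verified Lean document; each statement's English description precedes it below -/
import Mathlib

section
/- There exists a unique function X : ℝ² → ℂ^{d×d} satisfying X(t,s) = 0 for t < s and X(t,s) = I_d + Σ_{j=1}^N D_j(t) X(t−τ_j, s) for t ≥ s. Moreover, X is continuous at every point (t,s) ∈ ℝ² such that t − s ∉ F, where F := { Σ_{ℓ=1}^N n_ℓ τ_ℓ : (n_1, …, n_N) ∈ ℕ^N }. -/
open Set
open scoped Matrix.Norms.L2Operator

/-- The lattice `F = { ∑ ℓ n_ℓ τ_ℓ : n ∈ ℕ^{N+1} }` generated by the delays. -/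
def delayLattice {N : ℕ} (τ : Fin (N + 1) → ℝ) : Set ℝ :=
  {x : ℝ | ∃ n : Fin (N + 1) → ℕ, x = ∑ ℓ, (n ℓ : ℝ) * τ ℓ}

open Function Filter Topology

/-!
Method of steps. The defining relations say exactly that `X` is a fixed point of the operator
`X ↦ ((t, s) ↦ if t < s then 0 else 1 + ∑ j, D j t * X (t - τ j) s)`. If every delay is at least
`δ > 0`, the values of the image on `{t - s < c + δ}` depend only on the values on `{t - s < c}`,
so `n + 1` iterates from any two starting points agree on `{t - s < n δ}`. This gives uniqueness,
and existence by taking at each `(t, s)` the eventually constant value of the iterates from `0`.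
Continuity propagates along the same strips: near a point with `0 < t - s ∉ F` the relation
expresses `X` through its values near the points shifted by `-τ j`, which are again off `F`,
while `X` vanishes on the open set `t < s`.
-/

lemma closure_range_subset_delayLattice {N : ℕ} (τ : Fin (N + 1) → ℝ) :
    (AddSubmonoid.closure (range τ) : Set ℝ) ⊆ delayLattice τ := by
  intro x hx
  induction hx using AddSubmonoid.closure_induction with
  | mem x hx =>
    obtain ⟨j, rfl⟩ := hx
    exact ⟨Pi.single j 1, by simp [Pi.single_apply]⟩
  | zero => exact ⟨0, by simp⟩
  | add x y _ _ hx hy =>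
    obtain ⟨m, rfl⟩ := hx
    obtain ⟨n, rfl⟩ := hy
    exact ⟨m + n, by simp [add_mul, Finset.sum_add_distrib]⟩

section MethodOfSteps

variable {ι R : Type*} [Fintype ι] [Semiring R] (τ : ι → ℝ) (D : ι → ℝ → R)

noncomputable def delayStep (X : ℝ → ℝ → R) (t s : ℝ) : R :=
  if t < s then 0 else 1 + ∑ j, D j t * X (t - τ j) s

variable {τ D}

lemma delayStep_eq_self_iff {X : ℝ → ℝ → R} :
    delayStep τ D X = X ↔
      (∀ t s : ℝ, t < s → X t s = 0) ∧
        (∀ t s : ℝ, s ≤ t → X t s = 1 + ∑ j, D j t * X (t - τ j) s) := by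
  constructor
  · intro hX
    have hX' t s : X t s = delayStep τ D X t s := by rw [hX]
    exact ⟨fun t s h => by simp [hX' t s, delayStep, h],
      fun t s h => by rw [hX' t s]; simp [delayStep, not_lt.2 h]⟩
  · rintro ⟨hlt, hge⟩
    funext t s
    by_cases h : t < s
    · simp [delayStep, h, hlt t s h]
    · simp [delayStep, h, hge t s (not_lt.1 h)]

lemma delayStep_apply_of_lt (X : ℝ → ℝ → R) {t s : ℝ} (h : t < s) : delayStep τ D X t s = 0 :=
  if_pos h

variable {δ : ℝ}

lemma delayStep_congr_of_sub_lt (hτ : ∀ j, δ ≤ τ j) {X Y : ℝ → ℝ → R} {c : ℝ}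
    (hXY : ∀ t s, t - s < c → X t s = Y t s) {t s : ℝ} (hts : t - s < c + δ) :
    delayStep τ D X t s = delayStep τ D Y t s := by
  unfold delayStep
  congr 2
  refine Finset.sum_congr rfl fun j _ => ?_
  rw [hXY]
  linarith [hτ j]

lemma delayStep_iterate_congr_of_sub_lt (hτ : ∀ j, δ ≤ τ j) (X Y : ℝ → ℝ → R) (n : ℕ)
    {t s : ℝ} (hts : t - s < n * δ) :
    (delayStep τ D)^[n + 1] X t s = (delayStep τ D)^[n + 1] Y t s := by
  induction n generalizing t s with
  | zero =>
    have h : t < s := by simpa using hts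
    simp only [zero_add, iterate_one, delayStep_apply_of_lt _ h]
  | succ n ih =>
    rw [iterate_succ_apply', iterate_succ_apply' _ (n + 1)]
    exact delayStep_congr_of_sub_lt hτ (fun t s h => ih h) (by push_cast at hts; linarith)

lemma eq_of_delayStep_eq_self (hδ : 0 < δ) (hτ : ∀ j, δ ≤ τ j) {X Y : ℝ → ℝ → R}
    (hX : delayStep τ D X = X) (hY : delayStep τ D Y = Y) : X = Y := by
  funext t s
  obtain ⟨n, hn⟩ := exists_nat_gt ((t - s) / δ)
  rw [← iterate_fixed hX (n + 1), ← iterate_fixed hY (n + 1)]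
  exact delayStep_iterate_congr_of_sub_lt hτ X Y n ((div_lt_iff₀ hδ).1 hn)

lemma delayStep_iterate_eq_of_le (hτ : ∀ j, δ ≤ τ j) (X : ℝ → ℝ → R) {k m : ℕ} (hkm : k ≤ m)
    {t s : ℝ} (hts : t - s < k * δ) :
    (delayStep τ D)^[m + 1] X t s = (delayStep τ D)^[k + 1] X t s := by
  obtain ⟨l, rfl⟩ := Nat.exists_eq_add_of_le hkm
  rw [add_right_comm, iterate_add_apply]
  exact delayStep_iterate_congr_of_sub_lt hτ _ _ k hts

lemma exists_delayStep_eq_self (hδ : 0 < δ) (hτ : ∀ j, δ ≤ τ j) :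
    ∃ X : ℝ → ℝ → R, delayStep τ D X = X := by
  choose n hn using fun t s : ℝ => exists_nat_gt ((t - s) / δ)
  replace hn : ∀ t s, t - s < n t s * δ := fun t s => (div_lt_iff₀ hδ).1 (hn t s)
  have hX : ∀ (m : ℕ) t s, t - s < m * δ →
      (delayStep τ D)^[n t s + 1] 0 t s = (delayStep τ D)^[m + 1] 0 t s := by
    intro m t s hm
    rcases le_total (n t s) m with h | h
    · exact (delayStep_iterate_eq_of_le hτ 0 h (hn t s)).symm
    · exact delayStep_iterate_eq_of_le hτ 0 h hm
  refine ⟨fun t s => (delayStep τ D)^[n t s + 1] 0 t s, ?_⟩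
  funext t s
  rw [hX (n t s + 1) t s (by push_cast; linarith [hn t s]), iterate_succ_apply']
  exact delayStep_congr_of_sub_lt hτ (c := n t s * δ) (hX (n t s)) (by linarith [hn t s])

variable [TopologicalSpace R]

lemma continuousAt_uncurry_delayStep_of_lt (X : ℝ → ℝ → R) {p : ℝ × ℝ} (hp : p.1 < p.2) :
    ContinuousAt (uncurry (delayStep τ D X)) p := by
  refine continuousAt_const.congr (f := fun _ => (0 : R)) ?_
  filter_upwards [(isOpen_lt continuous_fst continuous_snd).mem_nhds hp] with q hq
  exact (delayStep_apply_of_lt X hq).symm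

variable [ContinuousAdd R] [ContinuousMul R]

lemma continuousAt_uncurry_delayStep_of_gt {X : ℝ → ℝ → R} {p : ℝ × ℝ} (hp : p.2 < p.1)
    (hD : ∀ j, ContinuousAt (D j) p.1) (hX : ∀ j, ContinuousAt (uncurry X) (p.1 - τ j, p.2)) :
    ContinuousAt (uncurry (delayStep τ D X)) p := by
  have hev : (fun q : ℝ × ℝ => 1 + ∑ j, D j q.1 * X (q.1 - τ j) q.2) =ᶠ[𝓝 p]
      uncurry (delayStep τ D X) := by
    filter_upwards [(isOpen_lt continuous_snd continuous_fst).mem_nhds hp] with q hq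
    exact (if_neg (not_lt.2 hq.le)).symm
  refine ContinuousAt.congr (continuousAt_const.add (tendsto_finsetSum _ fun j _ => ?_)) hev
  exact ((hD j).comp continuousAt_fst).mul
    ((hX j).comp (f := fun q : ℝ × ℝ => (q.1 - τ j, q.2)) (by fun_prop))

theorem continuousAt_uncurry_of_delayStep_eq_self (hδ : 0 < δ) (hτ : ∀ j, δ ≤ τ j)
    (hD : ∀ j, Continuous (D j)) {X : ℝ → ℝ → R} (hX : delayStep τ D X = X) {p : ℝ × ℝ}
    (hp : p.1 - p.2 ∉ AddSubmonoid.closure (range τ)) : ContinuousAt (uncurry X) p := by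
  suffices key : ∀ n : ℕ, ∀ p : ℝ × ℝ, p.1 - p.2 < n * δ →
      p.1 - p.2 ∉ AddSubmonoid.closure (range τ) → ContinuousAt (uncurry X) p by
    obtain ⟨n, hn⟩ := exists_nat_gt ((p.1 - p.2) / δ)
    exact key n p ((div_lt_iff₀ hδ).1 hn) hp
  rw [← hX]
  intro n
  induction n with
  | zero => exact fun p hp _ => continuousAt_uncurry_delayStep_of_lt X (by simpa using hp)
  | succ n ih =>
    intro p hpn hp
    rcases lt_trichotomy p.1 p.2 with hlt | heq | hgt
    · exact continuousAt_uncurry_delayStep_of_lt X hlt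
    · exact absurd (by simp [heq]) hp
    refine continuousAt_uncurry_delayStep_of_gt hgt (fun j => (hD j).continuousAt) fun j => ?_
    refine hX ▸ ih _ (by push_cast at hpn; linarith [hτ j]) fun hj => hp ?_
    simpa [sub_right_comm] using add_mem hj (AddSubmonoid.subset_closure (mem_range_self j))

end MethodOfSteps

theorem fundamental_solution_exists_unique_and_continuity_general
    (d N : ℕ)
    (τ : Fin (N + 1) → ℝ) (hτpos : ∀ j, 0 < τ j)
    (D : Fin (N + 1) → ℝ → Matrix (Fin d) (Fin d) ℂ) (hD : ∀ j, Continuous (D j)) :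
    (∃! X : ℝ → ℝ → Matrix (Fin d) (Fin d) ℂ,
        (∀ t s : ℝ, t < s → X t s = 0) ∧
        (∀ t s : ℝ, s ≤ t → X t s = 1 + ∑ j, D j t * X (t - τ j) s)) ∧
    (∀ X : ℝ → ℝ → Matrix (Fin d) (Fin d) ℂ,
        ((∀ t s : ℝ, t < s → X t s = 0) ∧
          (∀ t s : ℝ, s ≤ t → X t s = 1 + ∑ j, D j t * X (t - τ j) s)) →
        ∀ p : ℝ × ℝ, p.1 - p.2 ∉ delayLattice τ →
          ContinuousAt (fun q : ℝ × ℝ => X q.1 q.2) p) := by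
  obtain ⟨j₀, hmin⟩ := Finite.exists_min τ
  refine ⟨?_, fun X hX p hp => ?_⟩
  · obtain ⟨X, hX⟩ := exists_delayStep_eq_self (D := D) (hτpos j₀) hmin
    exact ⟨X, delayStep_eq_self_iff.1 hX,
      fun Y hY => eq_of_delayStep_eq_self (hτpos j₀) hmin (delayStep_eq_self_iff.2 hY) hX⟩
  · exact continuousAt_uncurry_of_delayStep_eq_self (hτpos j₀) hmin hD
      (delayStep_eq_self_iff.2 hX) fun h => hp (closure_range_subset_delayLattice τ h)

/-- **Existence, uniqueness and continuity off the lattice of the fundamental solution.**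

There exists a unique `X : ℝ² → ℂ^{d×d}` with `X t s = 0` for `t < s` and
`X t s = I_d + ∑ j, D j t * X (t - τ j) s` for `t ≥ s`. Moreover `X` is continuous
at every `(t,s)` with `t - s ∉ F`, `F` the lattice generated by the delays. -/
theorem fundamental_solution_exists_unique_and_continuity
    (d N : ℕ) (hd : 0 < d)
    (τ : Fin (N + 1) → ℝ) (hτpos : ∀ j, 0 < τ j) (hτmono : StrictMono τ)
    (D : Fin (N + 1) → ℝ → Matrix (Fin d) (Fin d) ℂ) (hD : ∀ j, Continuous (D j)) :
    (∃! X : ℝ → ℝ → Matrix (Fin d) (Fin d) ℂ,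
        (∀ t s : ℝ, t < s → X t s = 0) ∧
        (∀ t s : ℝ, s ≤ t → X t s = 1 + ∑ j, D j t * X (t - τ j) s)) ∧
    (∀ X : ℝ → ℝ → Matrix (Fin d) (Fin d) ℂ,
        ((∀ t s : ℝ, t < s → X t s = 0) ∧
          (∀ t s : ℝ, s ≤ t → X t s = 1 + ∑ j, D j t * X (t - τ j) s)) →
        ∀ p : ℝ × ℝ, p.1 - p.2 ∉ delayLattice τ →
          ContinuousAt (fun q : ℝ × ℝ => X q.1 q.2) p) :=
  fundamental_solution_exists_unique_and_continuity_general d N τ hτpos D hD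
end

section
/- There exists a family of continuous functions 𝔠_f : ℝ → ℂ^{d×d}, indexed by f ∈ F, such that for all s ≤ t the fundamental solution satisfies X(t,s) = − Σ_{f ∈ [0, t−s] ∩ F} 𝔠_f(t), the sum being finite since [0, t−s] ∩ F is finite. -/
open Set

lemma delayLattice_zero_mem {N : ℕ} (τ : Fin (N + 1) → ℝ) : (0:ℝ) ∈ delayLattice τ :=
  ⟨fun _ => 0, by simp⟩

lemma delayLattice_nonneg {N : ℕ} {τ : Fin (N + 1) → ℝ} (hτ : ∀ j, 0 < τ j)
    {x : ℝ} (hx : x ∈ delayLattice τ) : 0 ≤ x := by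
  obtain ⟨n, rfl⟩ := hx
  exact Finset.sum_nonneg fun ℓ _ => mul_nonneg (Nat.cast_nonneg _) (hτ ℓ).le

lemma delayLattice_add {N : ℕ} (τ : Fin (N + 1) → ℝ) (j : Fin (N + 1))
    {x : ℝ} (hx : x ∈ delayLattice τ) : x + τ j ∈ delayLattice τ := by
  obtain ⟨n, rfl⟩ := hx
  refine ⟨fun ℓ => n ℓ + if ℓ = j then 1 else 0, ?_⟩
  push_cast
  simp only [add_mul, Finset.sum_add_distrib, ite_mul, one_mul, zero_mul]
  simp [Finset.sum_ite_eq']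

lemma delayLattice_finite {N : ℕ} {τ : Fin (N + 1) → ℝ} (hτ : ∀ j, 0 < τ j) (T : ℝ) :
    (Icc 0 T ∩ delayLattice τ).Finite := by
  apply Set.Finite.subset
    (Set.Finite.image (fun n : Fin (N + 1) → ℕ => ∑ ℓ, (n ℓ : ℝ) * τ ℓ)
      (Set.Finite.pi fun ℓ => Set.finite_Iic (⌈T / τ ℓ⌉₊)))
  rintro x ⟨⟨hx0, hxT⟩, n, rfl⟩
  refine ⟨n, ?_, rfl⟩
  simp only [Set.mem_pi, Set.mem_univ, Set.mem_Iic, forall_true_left]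
  intro ℓ
  have h1 : (n ℓ : ℝ) * τ ℓ ≤ T := by
    refine le_trans (Finset.single_le_sum (f := fun i => (n i : ℝ) * τ i)
      (fun i _ => mul_nonneg (Nat.cast_nonneg _) (hτ i).le) (Finset.mem_univ ℓ)) hxT
  have h2 : (n ℓ : ℝ) ≤ T / τ ℓ := (le_div_iff₀ (hτ ℓ)).mpr h1
  have h3 : (n ℓ : ℝ) ≤ (⌈T / τ ℓ⌉₊ : ℝ) := h2.trans (Nat.le_ceil _)
  exact_mod_cast h3

/-- **Jump decomposition of the fundamental solution.**

There is a family of continuous maps `𝔠 f : ℝ → ℂ^{d×d}`, indexed by `f` in the delay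
lattice `F`, such that for all `s ≤ t` the set `[0, t-s] ∩ F` is finite and
`X t s = - ∑_{f ∈ [0,t-s] ∩ F} 𝔠 f t`. -/
theorem fundamental_solution_jump_decomposition
    (d N : ℕ) (hd : 0 < d)
    (τ : Fin (N + 1) → ℝ) (hτpos : ∀ j, 0 < τ j) (hτmono : StrictMono τ)
    (D : Fin (N + 1) → ℝ → Matrix (Fin d) (Fin d) ℂ) (hD : ∀ j, Continuous (D j))
    (X : ℝ → ℝ → Matrix (Fin d) (Fin d) ℂ)
    (hX0 : ∀ t s : ℝ, t < s → X t s = 0)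
    (hXrec : ∀ t s : ℝ, s ≤ t → X t s = 1 + ∑ j, D j t * X (t - τ j) s) :
    ∃ 𝔠 : ℝ → ℝ → Matrix (Fin d) (Fin d) ℂ,
      (∀ f ∈ delayLattice τ, Continuous (𝔠 f)) ∧
      ∀ s t : ℝ, s ≤ t →
        ∃ hfin : (Icc 0 (t - s) ∩ delayLattice τ).Finite,
          X t s = -∑ f ∈ hfin.toFinset, 𝔠 f t := by
  set F := delayLattice τ with hF
  have hτ0 : 0 < τ 0 := hτpos 0
  have hτ0le : ∀ j, τ 0 ≤ τ j := fun j => hτmono.monotone (Fin.zero_le j)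
  have hFin : ∀ T : ℝ, (Icc 0 T ∩ F).Finite := fun T => delayLattice_finite hτpos T
  -- X t t = 1
  have hXtt : ∀ t : ℝ, X t t = 1 := by
    intro t
    rw [hXrec t t le_rfl]
    have : ∀ j : Fin (N+1), D j t * X (t - τ j) t = 0 := by
      intro j; rw [hX0 _ _ (by linarith [hτpos j]), mul_zero]
    simp [this]
  -- local constancy
  have hconst : ∀ n : ℕ, ∀ t s s' : ℝ, s ≤ s' → s' ≤ t → t - s < n * τ 0 →
      (Icc 0 (t-s) ∩ F = Icc 0 (t-s') ∩ F) → X t s = X t s' := by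
    intro n
    induction n with
    | zero => intro t s s' h1 h2 h3 _; simp at h3; linarith
    | succ n ih =>
      intro t s s' h1 h2 h3 hset
      rw [hXrec t s (h1.trans h2), hXrec t s' h2]
      congr 1
      apply Finset.sum_congr rfl
      intro j _
      by_cases hc : t - τ j < s
      · rw [hX0 _ _ hc, hX0 _ _ (lt_of_lt_of_le hc h1)]
      · push_neg at hc
        have hj : τ j ∈ F := by
          have h := delayLattice_add τ j (delayLattice_zero_mem τ)
          simpa using h
        have h4 : τ j ∈ Icc 0 (t-s) ∩ F := ⟨⟨(hτpos j).le, by linarith⟩, hj⟩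
        rw [hset] at h4
        have h5 : τ j ≤ t - s' := h4.1.2
        congr 1
        have hcast : ((n+1 : ℕ) : ℝ) * τ 0 = n * τ 0 + τ 0 := by push_cast; ring
        apply ih (t - τ j) s s' h1 (by linarith)
          (by rw [hcast] at h3; linarith [hτ0le j])
        ext g
        simp only [mem_inter_iff, mem_Icc]
        constructor
        · rintro ⟨⟨hg0, hg1⟩, hgF⟩
          refine ⟨⟨hg0, ?_⟩, hgF⟩
          have hmem : g + τ j ∈ Icc 0 (t-s) ∩ F :=
            ⟨⟨by linarith [hτpos j], by linarith⟩, delayLattice_add τ j hgF⟩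
          rw [hset] at hmem
          linarith [hmem.1.2]
        · rintro ⟨⟨hg0, hg1⟩, hgF⟩
          exact ⟨⟨hg0, by linarith⟩, hgF⟩
  -- continuity of t ↦ X t (t - a)
  have hcontAux : ∀ n : ℕ, ∀ a : ℝ, a < n * τ 0 → Continuous (fun t => X t (t - a)) := by
    intro n
    induction n with
    | zero =>
      intro a ha
      simp only [Nat.cast_zero, zero_mul] at ha
      have : (fun t => X t (t - a)) = fun _ => (0 : Matrix (Fin d) (Fin d) ℂ) :=
        funext fun t => hX0 _ _ (by linarith)
      rw [this]; exact continuous_const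
    | succ n ih =>
      intro a ha
      by_cases h0 : a < 0
      · have : (fun t => X t (t - a)) = fun _ => (0 : Matrix (Fin d) (Fin d) ℂ) :=
          funext fun t => hX0 _ _ (by linarith)
        rw [this]; exact continuous_const
      · push_neg at h0
        have key : (fun t => X t (t - a)) =
            fun t => 1 + ∑ j, D j t * ((fun u => X u (u - (a - τ j))) (t - τ j)) := by
          funext t
          rw [hXrec t (t - a) (by linarith)]
          congr 1
          apply Finset.sum_congr rfl
          intro j _
          congr 1
          ring_nf
        rw [key]
        refine continuous_const.add (continuous_finset_sum _ fun j _ => ?_)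
        refine (hD j).matrix_mul ?_
        have hcast : ((n+1 : ℕ) : ℝ) * τ 0 = n * τ 0 + τ 0 := by push_cast; ring
        exact (ih (a - τ j) (by rw [hcast] at ha; linarith [hτ0le j])).comp
          (continuous_id.sub continuous_const)
  have hcont : ∀ a : ℝ, Continuous (fun t => X t (t - a)) := by
    intro a
    obtain ⟨n, hn⟩ := exists_nat_gt (a / τ 0)
    exact hcontAux n a ((div_lt_iff₀ hτ0).mp hn)
  -- the coefficient functions
  set c : ℝ → ℝ → Matrix (Fin d) (Fin d) ℂ :=
    fun f t => if f = 0 then -1 else X t (t - sSup (Ico 0 f ∩ F)) - X t (t - f) with hc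
  refine ⟨c, ?_, ?_⟩
  · intro f _
    by_cases h : f = 0
    · simp only [hc, if_pos h]; exact continuous_const
    · simp only [hc, if_neg h]; exact (hcont _).sub (hcont _)
  -- main telescoping identity
  have key : ∀ k : ℕ, ∀ T : ℝ, 0 ≤ T → (hFin T).toFinset.card ≤ k → ∀ t : ℝ,
      ∑ f ∈ (hFin T).toFinset, c f t = -X t (t - sSup (Icc 0 T ∩ F)) := by
    intro k
    induction k with
    | zero =>
      intro T hT hcard t
      exfalso
      have h0 : (0:ℝ) ∈ (hFin T).toFinset := by
        rw [Set.Finite.mem_toFinset]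
        exact ⟨⟨le_rfl, hT⟩, delayLattice_zero_mem τ⟩
      have := Finset.card_pos.mpr ⟨0, h0⟩
      omega
    | succ k ih =>
      intro T hT hcard t
      have hne : (Icc 0 T ∩ F).Nonempty := ⟨0, ⟨le_rfl, hT⟩, delayLattice_zero_mem τ⟩
      set M := sSup (Icc 0 T ∩ F) with hMdef
      have hM : M ∈ Icc 0 T ∩ F := Set.Nonempty.csSup_mem hne (hFin T)
      have hMub : ∀ g ∈ Icc 0 T ∩ F, g ≤ M := fun g hg => le_csSup (hFin T).bddAbove hg
      by_cases hM0 : M = 0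
      · have hseq : (hFin T).toFinset = {(0:ℝ)} := by
          ext g
          simp only [Set.Finite.mem_toFinset, Finset.mem_singleton]
          constructor
          · intro hg
            have := hMub g hg
            have := delayLattice_nonneg hτpos hg.2
            linarith [hM0 ▸ hMub g hg]
          · rintro rfl; exact ⟨⟨le_rfl, hT⟩, delayLattice_zero_mem τ⟩
        rw [hseq, Finset.sum_singleton, hM0]
        simp only [hc, if_pos rfl]
        rw [sub_zero, hXtt]
      · have hMpos : 0 < M := lt_of_le_of_ne hM.1.1 (Ne.symm hM0)
        have hne' : (Ico 0 M ∩ F).Nonempty := ⟨0, ⟨le_rfl, hMpos⟩, delayLattice_zero_mem τ⟩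
        have hfin' : (Ico 0 M ∩ F).Finite := (hFin M).subset (by
          intro g hg; exact ⟨⟨hg.1.1, hg.1.2.le⟩, hg.2⟩)
        set M' := sSup (Ico 0 M ∩ F) with hM'def
        have hM' : M' ∈ Ico 0 M ∩ F := Set.Nonempty.csSup_mem hne' hfin'
        have hM'ub : ∀ g ∈ Ico 0 M ∩ F, g ≤ M' := fun g hg => le_csSup hfin'.bddAbove hg
        have hsetEq : Icc 0 T ∩ F = insert M (Icc 0 M' ∩ F) := by
          ext g
          constructor
          · intro hg
            by_cases hgM : g = M
            · exact hgM ▸ Set.mem_insert _ _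
            · refine Set.mem_insert_of_mem _ ?_
              have hgltM : g < M := lt_of_le_of_ne (hMub g hg) hgM
              exact ⟨⟨hg.1.1, hM'ub g ⟨⟨hg.1.1, hgltM⟩, hg.2⟩⟩, hg.2⟩
          · rintro (rfl | hg)
            · exact hM
            · exact ⟨⟨hg.1.1, by linarith [hg.1.2, hM'.1.2, hM.1.2]⟩, hg.2⟩
        have hfs : (hFin T).toFinset = insert M ((hFin M').toFinset) := by
          ext g
          simp only [Set.Finite.mem_toFinset, Finset.mem_insert, hsetEq, Set.mem_insert_iff]
        have hMnot : M ∉ (hFin M').toFinset := by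
          rw [Set.Finite.mem_toFinset]
          rintro ⟨⟨_, hle⟩, _⟩
          linarith [hM'.1.2]
        rw [hfs, Finset.sum_insert hMnot]
        have hcard' : (hFin M').toFinset.card ≤ k := by
          rw [hfs, Finset.card_insert_of_notMem hMnot] at hcard
          omega
        rw [ih M' hM'.1.1 hcard' t]
        have hsup' : sSup (Icc 0 M' ∩ F) = M' := by
          apply le_antisymm
          · exact csSup_le ⟨M', ⟨hM'.1.1, le_rfl⟩, hM'.2⟩ fun g hg => hg.1.2
          · exact le_csSup (hFin M').bddAbove ⟨⟨hM'.1.1, le_rfl⟩, hM'.2⟩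
        rw [hsup']
        simp only [hc, if_neg (ne_of_gt hMpos)]
        abel
  -- conclusion
  intro s t hst
  refine ⟨hFin (t - s), ?_⟩
  have hne : (Icc 0 (t-s) ∩ F).Nonempty := ⟨0, ⟨le_rfl, by linarith⟩, delayLattice_zero_mem τ⟩
  set M := sSup (Icc 0 (t-s) ∩ F) with hMdef
  have hM : M ∈ Icc 0 (t-s) ∩ F := Set.Nonempty.csSup_mem hne (hFin (t-s))
  have hMub : ∀ g ∈ Icc 0 (t-s) ∩ F, g ≤ M := fun g hg => le_csSup (hFin (t-s)).bddAbove hg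
  rw [key (hFin (t-s)).toFinset.card (t-s) (by linarith) le_rfl t]
  rw [neg_neg]
  obtain ⟨n, hn⟩ := exists_nat_gt ((t - s) / τ 0)
  apply hconst n t s (t - M) (by linarith [hM.1.2]) (by linarith [hM.1.1])
    ((div_lt_iff₀ hτ0).mp hn)
  have hts : t - (t - M) = M := by ring
  rw [hts]
  ext g
  simp only [mem_inter_iff, mem_Icc]
  constructor
  · rintro ⟨⟨hg0, hg1⟩, hgF⟩
    exact ⟨⟨hg0, hMub g ⟨⟨hg0, hg1⟩, hgF⟩⟩, hgF⟩
  · rintro ⟨⟨hg0, hg1⟩, hgF⟩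
    exact ⟨⟨hg0, by linarith [hM.1.2]⟩, hgF⟩
end

section
/- (Representation formula.) For every s ∈ ℝ and every φ ∈ C_s, the unique continuous solution y : [s−τ_N, +∞) → ℂ^d of the difference-delay system satisfies, for all t ≥ s: y(t) = − Σ_{j=1}^N ∫_{[s, s+τ_j)} d_α X(t,α) D_j(α) φ(α − τ_j − s), where for each fixed t the integrals are Lebesgue–Stieltjes integrals over [s, s+τ_j) against the matrix-valued measure associated with the restriction of the function α ↦ X(t,α) (which is locally of bounded variation) to [s, s+τ_j). -/
open MeasureTheory Set
open scoped ENNReal NNReal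
open scoped Matrix.Norms.L2Operator

noncomputable section

-- The Lebesgue–Stieltjes measure of a monotone function (zero if not monotone).
open scoped Classical in
noncomputable def monoMeasure (m : ℝ → ℝ) : Measure ℝ :=
  if h : Monotone m then h.stieltjesFunction.measure else 0

/-- The function `f` clamped to the interval `[c,e]`. -/
def clampOn (f : ℝ → ℝ) (c e : ℝ) : ℝ → ℝ := fun x => f (max c (min x e))

/-- Cumulative total variation of the clamped function. -/
def varFun (f : ℝ → ℝ) (c e : ℝ) : ℝ → ℝ :=
  fun x => (eVariationOn (clampOn f c e) (Icc c x)).toReal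

/-- Positive (Jordan) part. -/
def posPartFun (f : ℝ → ℝ) (c e : ℝ) : ℝ → ℝ :=
  fun x => (varFun f c e x + clampOn f c e x - f c) / 2

/-- Negative (Jordan) part. -/
def negPartFun (f : ℝ → ℝ) (c e : ℝ) : ℝ → ℝ :=
  fun x => (varFun f c e x - clampOn f c e x + f c) / 2

/-- Lebesgue–Stieltjes integral of `φ` against (the measure associated with the
restriction to `[c,e)` of) the function `f`, over `[c,e)`. -/
def lsIntIcoR (f : ℝ → ℝ) (c e : ℝ) (φ : ℝ → ℝ) : ℝ :=
  (∫ x in Ico c e, φ x ∂(monoMeasure (posPartFun f c e))) -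
  (∫ x in Ico c e, φ x ∂(monoMeasure (negPartFun f c e)))

/-- Same, over the open interval `(c,e)`. -/
def lsIntIooR (f : ℝ → ℝ) (c e : ℝ) (φ : ℝ → ℝ) : ℝ :=
  (∫ x in Ioo c e, φ x ∂(monoMeasure (posPartFun f c e))) -
  (∫ x in Ioo c e, φ x ∂(monoMeasure (negPartFun f c e)))

/-- Complex Lebesgue–Stieltjes integral `∫_{[c,e)} φ df`. -/
def lsIntIcoC (f : ℝ → ℂ) (c e : ℝ) (φ : ℝ → ℂ) : ℂ :=
  (lsIntIcoR (fun x => (f x).re) c e (fun x => (φ x).re)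
    - lsIntIcoR (fun x => (f x).im) c e (fun x => (φ x).im))
  + Complex.I * (lsIntIcoR (fun x => (f x).re) c e (fun x => (φ x).im)
    + lsIntIcoR (fun x => (f x).im) c e (fun x => (φ x).re))

def lsIntIooC (f : ℝ → ℂ) (c e : ℝ) (φ : ℝ → ℂ) : ℂ :=
  (lsIntIooR (fun x => (f x).re) c e (fun x => (φ x).re)
    - lsIntIooR (fun x => (f x).im) c e (fun x => (φ x).im))
  + Complex.I * (lsIntIooR (fun x => (f x).re) c e (fun x => (φ x).im)
    + lsIntIooR (fun x => (f x).im) c e (fun x => (φ x).re))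

/-- `∫_{[c,e)} dF(τ) G(τ)` for matrix-valued `F` (the integrator) and `G`. -/
def lsIntIcoMM {d : ℕ} (F : ℝ → Matrix (Fin d) (Fin d) ℂ) (c e : ℝ)
    (G : ℝ → Matrix (Fin d) (Fin d) ℂ) : Matrix (Fin d) (Fin d) ℂ :=
  Matrix.of fun i k => ∑ j, lsIntIcoC (fun τ => F τ i j) c e (fun τ => G τ j k)

/-- `∫_{[c,e)} dF(τ) g(τ)` for matrix-valued `F` and vector-valued `g`. -/
def lsIntIcoMV {d : ℕ} (F : ℝ → Matrix (Fin d) (Fin d) ℂ) (c e : ℝ)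
    (g : ℝ → Fin d → ℂ) : Fin d → ℂ :=
  fun i => ∑ j, lsIntIcoC (fun τ => F τ i j) c e (fun τ => g τ j)

def lsIntIooMV {d : ℕ} (F : ℝ → Matrix (Fin d) (Fin d) ℂ) (c e : ℝ)
    (g : ℝ → Fin d → ℂ) : Fin d → ℂ :=
  fun i => ∑ j, lsIntIooC (fun τ => F τ i j) c e (fun τ => g τ j)

instance matrixMeasurableSpace {d : ℕ} : MeasurableSpace (Matrix (Fin d) (Fin d) ℂ) :=
  inferInstanceAs (MeasurableSpace (Fin d → Fin d → ℂ))

/-- A Stieltjes–Volterra kernel of type `B^∞` on `[a,b] × [a,b]`. -/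
def IsSVKernel (d : ℕ) (a b : ℝ) (κ : ℝ → ℝ → Matrix (Fin d) (Fin d) ℂ) : Prop :=
  Measurable ((Icc a b ×ˢ Icc a b).restrict (fun p : ℝ × ℝ => κ p.1 p.2)) ∧
  (∀ t ∈ Icc a b, ∀ τ ∈ Icc a b, t ≤ τ → κ t τ = 0) ∧
  (∀ t ∈ Icc a b, ∀ x ∈ Icc a b, ContinuousWithinAt (κ t) (Icc a b ∩ Iio x) x) ∧
  (∃ C : ℝ, ∀ t ∈ Icc a b, eVariationOn (κ t) (Icc a b) ≤ ENNReal.ofReal C) ∧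
  (∀ ε > (0:ℝ), ∃ η > (0:ℝ), ∀ t ∈ Icc a b, ∀ τ ∈ Icc a b, 0 < t - τ → t - τ < η →
      eVariationOn (κ t) (Ico τ t) < ENNReal.ofReal ε)

/-- The norm `‖κ‖_{[a,b]} = sup_t ‖κ(t,·)‖_{BV([a,b])}` (base point `b`). -/
def KNorm (d : ℕ) (a b : ℝ) (κ : ℝ → ℝ → Matrix (Fin d) (Fin d) ℂ) : ℝ≥0∞ :=
  ⨆ t ∈ Icc a b, eVariationOn (κ t) (Icc a b)

/-- `ρ` is a resolvent of the kernel `κ`. -/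
def IsResolvent (d : ℕ) (a b : ℝ) (κ ρ : ℝ → ℝ → Matrix (Fin d) (Fin d) ℂ) : Prop :=
  IsSVKernel d a b ρ ∧
  ∀ t ∈ Icc a b, ∀ β ∈ Icc a b,
    ρ t β = -κ t β + lsIntIcoMM (κ t) β t (fun τ => ρ τ β)

/-!
The fundamental solution satisfies `X t α = 1_{α ≤ t} + ∑ j, D j t * X (t - τ j) α`, so by
induction along the delays every `α ↦ X t α` is, on `[s, e]`, a finite step function with
jumps in `[s, e)`. Against such an integrator the Lebesgue–Stieltjes integral of a continuous
function is minus the sum of the jumps times its values at the jump points; in particular it is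
additive in the integrator. Substituting the recursion for `X` into the right-hand side `R t`
of the formula gives `R t = ∑ j, D j t *ᵥ R (t - τ j)`, where `R (t - τ j)` is replaced by
`φ (t - τ j - s)` once `t - τ j < s`. This is the recursion satisfied by `y`, with the same
initial data, so `y = R` by induction along the delays.
-/

open Filter Topology Function
open scoped Matrix

section Stieltjes

lemma monoMeasure_of_monotone {m : ℝ → ℝ} (hm : Monotone m) :
    monoMeasure m = hm.stieltjesFunction.measure :=
  dif_pos hm

lemma monoMeasure_add {m n : ℝ → ℝ} (hm : Monotone m) (hn : Monotone n) :
    monoMeasure (fun x => m x + n x) = monoMeasure m + monoMeasure n := by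
  have hsum : (hm.add hn).stieltjesFunction = hm.stieltjesFunction + hn.stieltjesFunction :=
    StieltjesFunction.ext fun x => by
      simp only [StieltjesFunction.add_apply, Monotone.stieltjesFunction_eq]
      exact rightLim_eq_of_tendsto ((hm.tendsto_rightLim x).add (hn.tendsto_rightLim x))
  rw [monoMeasure_of_monotone hm, monoMeasure_of_monotone hn,
    monoMeasure_of_monotone (hm.add hn), hsum, StieltjesFunction.measure_add]

lemma monoMeasure_const (b : ℝ) : monoMeasure (fun _ => b) = 0 := by
  have hb : (monotone_const (β := ℝ) (c := b)).stieltjesFunction = StieltjesFunction.const ℝ b :=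
    StieltjesFunction.ext fun x => rightLim_eq_of_tendsto tendsto_const_nhds
  rw [monoMeasure_of_monotone monotone_const, hb, StieltjesFunction.measure_const]

lemma monoMeasure_sum {ι : Type*} (K : Finset ι) {m : ι → ℝ → ℝ} (hm : ∀ i, Monotone (m i)) :
    monoMeasure (fun x => ∑ i ∈ K, m i x) = ∑ i ∈ K, monoMeasure (m i) := by
  classical
  induction K using Finset.induction_on with
  | empty => simpa using monoMeasure_const 0
  | insert a K ha ih =>
    simp only [Finset.sum_insert ha]
    rw [monoMeasure_add (hm a) (fun x y h => Finset.sum_le_sum fun i _ => hm i h), ih]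

lemma integrableOn_Ico_monoMeasure {m : ℝ → ℝ} (hm : Monotone m) {φ : ℝ → ℝ} {c e : ℝ}
    (hφ : ContinuousOn φ (Icc c e)) : IntegrableOn φ (Ico c e) (monoMeasure m) := by
  rw [monoMeasure_of_monotone hm]
  exact hφ.integrableOn_Icc.mono_set Ico_subset_Icc_self

lemma integral_monoMeasure_sub_eq {m₁ m₂ n₁ n₂ : ℝ → ℝ} (hm₁ : Monotone m₁) (hm₂ : Monotone m₂)
    (hn₁ : Monotone n₁) (hn₂ : Monotone n₂) (h : ∀ x, m₁ x - m₂ x = n₁ x - n₂ x)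
    {φ : ℝ → ℝ} {c e : ℝ} (hφ : ContinuousOn φ (Icc c e)) :
    (∫ x in Ico c e, φ x ∂monoMeasure m₁) - ∫ x in Ico c e, φ x ∂monoMeasure m₂ =
      (∫ x in Ico c e, φ x ∂monoMeasure n₁) - ∫ x in Ico c e, φ x ∂monoMeasure n₂ := by
  have hfun : (fun x => m₁ x + n₂ x) = fun x => n₁ x + m₂ x := by
    funext x; linarith [h x]
  have hμ := congrArg (fun m => ∫ x in Ico c e, φ x ∂monoMeasure m) hfun
  simp only [monoMeasure_add hm₁ hn₂, monoMeasure_add hn₁ hm₂, Measure.restrict_add] at hμ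
  rw [integral_add_measure (integrableOn_Ico_monoMeasure hm₁ hφ)
      (integrableOn_Ico_monoMeasure hn₂ hφ),
    integral_add_measure (integrableOn_Ico_monoMeasure hn₁ hφ)
      (integrableOn_Ico_monoMeasure hm₂ hφ)] at hμ
  linarith

def stepAt (r p : ℝ) : ℝ → ℝ := fun x => if p < x then r else 0

lemma monotone_stepAt {r : ℝ} (hr : 0 ≤ r) (p : ℝ) : Monotone (stepAt r p) := by
  intro x y hxy
  simp only [stepAt]
  split_ifs <;> linarith

lemma monoMeasure_stepAt {r : ℝ} (hr : 0 ≤ r) (p : ℝ) :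
    monoMeasure (stepAt r p) = ENNReal.ofReal r • Measure.dirac p := by
  have hlim : ∀ x, rightLim (stepAt r p) x = if p ≤ x then r else 0 := by
    intro x
    apply rightLim_eq_of_tendsto
    by_cases h : p ≤ x
    · refine tendsto_const_nhds.congr' ?_
      filter_upwards [self_mem_nhdsWithin] with y hy
      simp [stepAt, h, h.trans_lt hy]
    · refine tendsto_const_nhds.congr' ?_
      filter_upwards [Ioo_mem_nhdsGT (not_le.1 h)] with y hy
      simp [stepAt, h, not_lt.2 hy.2.le]
  rw [monoMeasure_of_monotone (monotone_stepAt hr p)]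
  refine Measure.ext_of_Ioc _ _ fun a b hab => ?_
  rw [StieltjesFunction.measure_Ioc, Monotone.stieltjesFunction_eq,
    Monotone.stieltjesFunction_eq, hlim, hlim, Measure.smul_apply,
    Measure.dirac_apply' _ measurableSet_Ioc]
  by_cases hb : p ≤ b <;> by_cases ha : p ≤ a
  · simp [ha, hb]
  · simp [ha, hb, indicator_of_mem (show p ∈ Ioc a b from ⟨not_le.1 ha, hb⟩)]
  · exact absurd (ha.trans hab.le) hb
  · simp [ha, hb]

lemma integral_Ico_monoMeasure_sum_stepAt {n : ℕ} {r p : Fin n → ℝ} (hr : ∀ i, 0 ≤ r i)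
    {c e : ℝ} (hp : ∀ i, p i ∈ Ico c e) (φ : ℝ → ℝ) :
    ∫ x in Ico c e, φ x ∂monoMeasure (fun x => ∑ i, stepAt (r i) (p i) x) =
      ∑ i, r i * φ (p i) := by
  have hrestrict : ∀ μ : Fin n → Measure ℝ,
      (∑ i, μ i).restrict (Ico c e) = ∑ i, (μ i).restrict (Ico c e) := fun μ => by
    simpa only [Measure.restrictₗ_apply] using
      map_sum (Measure.restrictₗ (Ico c e)) μ Finset.univ
  rw [monoMeasure_sum _ fun i => monotone_stepAt (hr i) (p i), hrestrict,
    integral_finsetSum_measure fun i _ => ?_]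
  · refine Finset.sum_congr rfl fun i _ => ?_
    rw [monoMeasure_stepAt (hr i), Measure.restrict_smul, integral_smul_measure,
      restrict_dirac' measurableSet_Ico, if_pos (hp i), integral_dirac,
      ENNReal.toReal_ofReal (hr i), smul_eq_mul]
  · rw [monoMeasure_stepAt (hr i), Measure.restrict_smul, restrict_dirac' measurableSet_Ico,
      if_pos (hp i)]
    exact (integrable_dirac enorm_lt_top).smul_measure ENNReal.ofReal_ne_top

end Stieltjes

lemma eVariationOn_sub_le {α E : Type*} [LinearOrder α] [SeminormedAddCommGroup E]
    (f g : α → E) (s : Set α) :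
    eVariationOn (f - g) s ≤ eVariationOn f s + eVariationOn g s := by
  refine iSup_le fun ⟨n, u, hu, us⟩ => ?_
  calc ∑ i ∈ Finset.range n, edist ((f - g) (u (i + 1))) ((f - g) (u i))
      ≤ ∑ i ∈ Finset.range n,
          (edist (f (u (i + 1))) (f (u i)) + edist (g (u (i + 1))) (g (u i))) :=
        Finset.sum_le_sum fun i _ => by
          simpa only [Pi.sub_apply, sub_eq_add_neg, edist_neg_neg] using
            edist_add_add_le (f (u (i + 1))) (-g (u (i + 1))) (f (u i)) (-g (u i))
    _ ≤ eVariationOn f s + eVariationOn g s := by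
      rw [Finset.sum_add_distrib]
      exact add_le_add (eVariationOn.sum_le hu us) (eVariationOn.sum_le hu us)

lemma Monotone.locallyBoundedVariationOn_sub {f g : ℝ → ℝ} (hf : Monotone f)
    (hg : Monotone g) : LocallyBoundedVariationOn (f - g) univ := fun a b _ _ =>
  ne_top_of_le_ne_top
    (ENNReal.add_ne_top.2 ⟨(hf.monotoneOn univ).locallyBoundedVariationOn a b trivial trivial,
      (hg.monotoneOn univ).locallyBoundedVariationOn a b trivial trivial⟩)
    (eVariationOn_sub_le f g _)

section JordanDecomposition

variable {f : ℝ → ℝ} {c e : ℝ}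

lemma clampOn_max (hce : c ≤ e) (x : ℝ) : clampOn f c e (max x c) = clampOn f c e x := by
  rcases le_total x c with h | h
  · simp only [clampOn, max_eq_right h, min_eq_left hce, max_self,
      max_eq_left ((min_le_left x e).trans h)]
  · rw [max_eq_left h]

lemma varFun_max (x : ℝ) : varFun f c e (max x c) = varFun f c e x := by
  rcases le_total x c with h | h
  · simp only [varFun, max_eq_right h, eVariationOn.subsingleton _ (subsingleton_Icc_of_ge h),
      eVariationOn.subsingleton _ (subsingleton_Icc_of_ge le_rfl)]
  · rw [max_eq_left h]

lemma abs_clampOn_sub_le_varFun_sub (hf : LocallyBoundedVariationOn (clampOn f c e) univ)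
    {x₁ x₂ : ℝ} (hx₁ : c ≤ x₁) (hx₁₂ : x₁ ≤ x₂) :
    |clampOn f c e x₂ - clampOn f c e x₁| ≤ varFun f c e x₂ - varFun f c e x₁ := by
  have hvar : ∀ x, c ≤ x → varFun f c e x = variationOnFromTo (clampOn f c e) univ c x :=
    fun x hx => by rw [varFun, variationOnFromTo.eq_of_le _ _ hx, univ_inter]
  rw [hvar x₁ hx₁, hvar x₂ (hx₁.trans hx₁₂)]
  exact variationOnFromTo.abs_sub_le_sub_of_le hf trivial trivial trivial hx₁₂

lemma posPartFun_sub_negPartFun (x : ℝ) :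
    posPartFun f c e x - negPartFun f c e x = clampOn f c e x - f c := by
  simp only [posPartFun, negPartFun]
  ring

lemma monotone_posPartFun (hce : c ≤ e) (hf : LocallyBoundedVariationOn (clampOn f c e) univ) :
    Monotone (posPartFun f c e) := by
  intro x₁ x₂ h
  have := abs_clampOn_sub_le_varFun_sub hf (le_max_right x₁ c) (max_le_max_right c h)
  rw [clampOn_max hce, clampOn_max hce, varFun_max, varFun_max] at this
  simp only [posPartFun]
  linarith [neg_abs_le (clampOn f c e x₂ - clampOn f c e x₁)]

lemma monotone_negPartFun (hce : c ≤ e) (hf : LocallyBoundedVariationOn (clampOn f c e) univ) :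
    Monotone (negPartFun f c e) := by
  intro x₁ x₂ h
  have := abs_clampOn_sub_le_varFun_sub hf (le_max_right x₁ c) (max_le_max_right c h)
  rw [clampOn_max hce, clampOn_max hce, varFun_max, varFun_max] at this
  simp only [negPartFun]
  linarith [le_abs_self (clampOn f c e x₂ - clampOn f c e x₁)]

lemma lsIntIcoR_eq_of_sub {n₁ n₂ : ℝ → ℝ} (hce : c ≤ e) (hn₁ : Monotone n₁) (hn₂ : Monotone n₂)
    (h : ∀ x, clampOn f c e x - f c = n₁ x - n₂ x) {φ : ℝ → ℝ} (hφ : ContinuousOn φ (Icc c e)) :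
    lsIntIcoR f c e φ =
      (∫ x in Ico c e, φ x ∂monoMeasure n₁) - ∫ x in Ico c e, φ x ∂monoMeasure n₂ := by
  have hbv : LocallyBoundedVariationOn (clampOn f c e) univ := by
    have hsplit : clampOn f c e = (fun x => f c + n₁ x) - n₂ :=
      funext fun x => by simp only [Pi.sub_apply]; linarith [h x]
    rw [hsplit]
    exact (hn₁.const_add _).locallyBoundedVariationOn_sub hn₂
  exact integral_monoMeasure_sub_eq (monotone_posPartFun hce hbv) (monotone_negPartFun hce hbv)
    hn₁ hn₂ (fun x => by rw [posPartFun_sub_negPartFun, h]) hφ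

lemma lsIntIcoR_eq_sum {n : ℕ} {p a : Fin n → ℝ} {b : ℝ} (hce : c ≤ e)
    (hp : ∀ i, p i ∈ Ico c e) (hf : EqOn f (fun x => b + ∑ i, if x ≤ p i then a i else 0) (Icc c e))
    {φ : ℝ → ℝ} (hφ : ContinuousOn φ (Icc c e)) :
    lsIntIcoR f c e φ = -∑ i, a i * φ (p i) := by
  have hclamp : ∀ x, clampOn f c e x - f c =
      (∑ i, stepAt (a i)⁻ (p i) x) - ∑ i, stepAt (a i)⁺ (p i) x := by
    intro x
    have hle : ∀ i, max c (min x e) ≤ p i ↔ x ≤ p i := fun i => by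
      simp [(hp i).1, (hp i).2]
    rw [clampOn, hf ⟨le_max_left _ _, max_le hce (min_le_right _ _)⟩, hf (left_mem_Icc.2 hce)]
    simp only [hle, add_sub_add_left_eq_sub, ← Finset.sum_sub_distrib]
    refine Finset.sum_congr rfl fun i _ => ?_
    by_cases hx : x ≤ p i
    · simp [stepAt, hx, (hp i).1, not_lt.2 hx]
    · simp [stepAt, hx, (hp i).1, not_le.1 hx]
  have hmono : ∀ r : Fin n → ℝ, (∀ i, 0 ≤ r i) → Monotone fun x => ∑ i, stepAt (r i) (p i) x :=
    fun r hr x y hxy => Finset.sum_le_sum fun i _ => monotone_stepAt (hr i) (p i) hxy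
  rw [lsIntIcoR_eq_of_sub hce (hmono _ fun i => negPart_nonneg _)
      (hmono _ fun i => posPart_nonneg _) hclamp hφ,
    integral_Ico_monoMeasure_sum_stepAt (fun i => negPart_nonneg _) hp,
    integral_Ico_monoMeasure_sum_stepAt (fun i => posPart_nonneg _) hp,
    ← Finset.sum_sub_distrib, ← Finset.sum_neg_distrib]
  refine Finset.sum_congr rfl fun i _ => ?_
  linear_combination (-φ (p i)) * posPart_sub_negPart (a i)

end JordanDecomposition

/-- `f` is left-continuous on `[c, e]`: it drops by `a i` just after `p i`, which is why
Stieltjes integrals against it carry a minus sign. -/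
def IsStepFunctionOn {M : Type*} [AddCommMonoid M] (f : ℝ → M) (c e : ℝ) : Prop :=
  ∃ (n : ℕ) (p : Fin n → ℝ) (a : Fin n → M) (b : M), (∀ i, p i ∈ Ico c e) ∧
    EqOn f (fun x => b + ∑ i, if x ≤ p i then a i else 0) (Icc c e)

namespace IsStepFunctionOn

variable {M N : Type*} [AddCommMonoid M] [AddCommMonoid N] {f g : ℝ → M} {c e : ℝ}

lemma congr (hf : IsStepFunctionOn f c e) (h : EqOn f g (Icc c e)) : IsStepFunctionOn g c e :=
  let ⟨n, p, a, b, hp, hf⟩ := hf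
  ⟨n, p, a, b, hp, h.symm.trans hf⟩

lemma const (b : M) : IsStepFunctionOn (fun _ => b) c e :=
  ⟨0, Fin.elim0, Fin.elim0, b, Fin.rec0, fun x _ => by simp⟩

lemma ite_le {u : ℝ} (hcu : c ≤ u) (m : M) :
    IsStepFunctionOn (fun x => if x ≤ u then m else 0) c e := by
  by_cases hue : u < e
  · exact ⟨1, fun _ => u, fun _ => m, 0, fun _ => ⟨hcu, hue⟩, fun x _ => by simp⟩
  · exact (const m).congr fun x hx => by simp [hx.2.trans (not_lt.1 hue)]

lemma add (hf : IsStepFunctionOn f c e) (hg : IsStepFunctionOn g c e) :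
    IsStepFunctionOn (fun x => f x + g x) c e := by
  obtain ⟨n₁, p₁, a₁, b₁, hp₁, hf⟩ := hf
  obtain ⟨n₂, p₂, a₂, b₂, hp₂, hg⟩ := hg
  refine ⟨n₁ + n₂, Fin.append p₁ p₂, Fin.append a₁ a₂, b₁ + b₂,
    Fin.addCases (by simpa using hp₁) (by simpa using hp₂), fun x hx => ?_⟩
  simp only [hf hx, hg hx, Fin.sum_univ_add, Fin.append_left, Fin.append_right]
  abel

lemma sum {ι : Type*} (K : Finset ι) {F : ι → ℝ → M} (h : ∀ l ∈ K, IsStepFunctionOn (F l) c e) :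
    IsStepFunctionOn (fun x => ∑ l ∈ K, F l x) c e := by
  classical
  induction K using Finset.induction_on with
  | empty => simpa using const (0 : M)
  | insert l K hl ih =>
    simp only [Finset.sum_insert hl]
    exact (h l (K.mem_insert_self l)).add (ih fun i hi => h i (Finset.mem_insert_of_mem hi))

lemma map (hf : IsStepFunctionOn f c e) (ψ : M →+ N) : IsStepFunctionOn (fun x => ψ (f x)) c e :=
  let ⟨n, p, a, b, hp, hf⟩ := hf
  ⟨n, p, fun i => ψ (a i), ψ b, hp, fun x hx => by simp [hf hx, map_sum, apply_ite ψ]⟩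

lemma mul_left {R : Type*} [NonUnitalNonAssocSemiring R] {f : ℝ → R}
    (hf : IsStepFunctionOn f c e) (r : R) : IsStepFunctionOn (fun x => r * f x) c e :=
  hf.map (AddMonoidHom.mulLeft r)

lemma entry {m n R : Type*} [AddCommMonoid R] {F : ℝ → Matrix m n R}
    (hF : IsStepFunctionOn F c e) (i : m) (k : n) : IsStepFunctionOn (fun x => F x i k) c e :=
  hF.map (Matrix.entryAddMonoidHom R i k)

end IsStepFunctionOn

section ComplexStieltjes

variable {c e : ℝ} {φ : ℝ → ℂ}

lemma lsIntIcoC_eq_sum {f : ℝ → ℂ} {n : ℕ} {p : Fin n → ℝ} {a : Fin n → ℂ} {b : ℂ} (hce : c ≤ e)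
    (hp : ∀ i, p i ∈ Ico c e) (hf : EqOn f (fun x => b + ∑ i, if x ≤ p i then a i else 0) (Icc c e))
    (hφ : ContinuousOn φ (Icc c e)) :
    lsIntIcoC f c e φ = -∑ i, a i * φ (p i) := by
  have hre : EqOn (fun x => (f x).re)
      (fun x => b.re + ∑ i, if x ≤ p i then (a i).re else 0) (Icc c e) :=
    fun x hx => by simp [hf hx, Complex.re_sum, apply_ite Complex.re]
  have him : EqOn (fun x => (f x).im)
      (fun x => b.im + ∑ i, if x ≤ p i then (a i).im else 0) (Icc c e) :=
    fun x hx => by simp [hf hx, Complex.im_sum, apply_ite Complex.im]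
  have hφre : ContinuousOn (fun x => (φ x).re) (Icc c e) :=
    Complex.continuous_re.comp_continuousOn hφ
  have hφim : ContinuousOn (fun x => (φ x).im) (Icc c e) :=
    Complex.continuous_im.comp_continuousOn hφ
  rw [lsIntIcoC, lsIntIcoR_eq_sum hce hp hre hφre, lsIntIcoR_eq_sum hce hp him hφim,
    lsIntIcoR_eq_sum hce hp hre hφim, lsIntIcoR_eq_sum hce hp him hφre]
  apply Complex.ext <;> simp [Complex.re_sum, Complex.im_sum, Finset.sum_add_distrib] <;> ring

lemma lsIntIcoC_const (hce : c ≤ e) (z : ℂ) (hφ : ContinuousOn φ (Icc c e)) :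
    lsIntIcoC (fun _ => z) c e φ = 0 := by
  simpa using lsIntIcoC_eq_sum (p := Fin.elim0) (a := Fin.elim0) (b := z) hce Fin.rec0
    (fun x _ => by simp) hφ

lemma lsIntIcoC_ite_le {u : ℝ} (hcu : c ≤ u) (hce : c ≤ e) (z : ℂ)
    (hφ : ContinuousOn φ (Icc c e)) :
    lsIntIcoC (fun x => if x ≤ u then z else 0) c e φ = if u < e then -(z * φ u) else 0 := by
  by_cases hue : u < e
  · simpa [hue] using lsIntIcoC_eq_sum (p := fun _ : Fin 1 => u) (a := fun _ => z) (b := 0)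
      hce (fun _ => ⟨hcu, hue⟩) (fun x _ => by simp) hφ
  · rw [if_neg hue]
    simpa using lsIntIcoC_eq_sum (f := fun x => if x ≤ u then z else 0) (p := Fin.elim0)
      (a := Fin.elim0) (b := z) hce Fin.rec0 (fun x hx => by simp [hx.2.trans (not_lt.1 hue)]) hφ

lemma lsIntIcoC_add {f g : ℝ → ℂ} (hce : c ≤ e) (hf : IsStepFunctionOn f c e)
    (hg : IsStepFunctionOn g c e) (hφ : ContinuousOn φ (Icc c e)) :
    lsIntIcoC (fun x => f x + g x) c e φ = lsIntIcoC f c e φ + lsIntIcoC g c e φ := by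
  obtain ⟨n₁, p₁, a₁, b₁, hp₁, hf⟩ := hf
  obtain ⟨n₂, p₂, a₂, b₂, hp₂, hg⟩ := hg
  rw [lsIntIcoC_eq_sum hce hp₁ hf hφ, lsIntIcoC_eq_sum hce hp₂ hg hφ,
    lsIntIcoC_eq_sum (p := Fin.append p₁ p₂) (a := Fin.append a₁ a₂) (b := b₁ + b₂) hce
      (Fin.addCases (by simpa using hp₁) (by simpa using hp₂)) (fun x hx => by
        simp only [hf hx, hg hx, Fin.sum_univ_add, Fin.append_left, Fin.append_right]
        abel) hφ]
  simp only [Fin.sum_univ_add, Fin.append_left, Fin.append_right]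
  ring

lemma lsIntIcoC_const_mul {f : ℝ → ℂ} (hce : c ≤ e) (z : ℂ) (hf : IsStepFunctionOn f c e)
    (hφ : ContinuousOn φ (Icc c e)) :
    lsIntIcoC (fun x => z * f x) c e φ = z * lsIntIcoC f c e φ := by
  obtain ⟨n, p, a, b, hp, hf⟩ := hf
  rw [lsIntIcoC_eq_sum hce hp hf hφ,
    lsIntIcoC_eq_sum (a := fun i => z * a i) (b := z * b) hce hp (fun x hx => by
      simp [hf hx, mul_add, Finset.mul_sum, mul_ite]) hφ, mul_neg, Finset.mul_sum]
  simp only [mul_assoc]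

lemma lsIntIcoC_sum {ι : Type*} (hce : c ≤ e) (K : Finset ι) {F : ι → ℝ → ℂ}
    (h : ∀ l ∈ K, IsStepFunctionOn (F l) c e) (hφ : ContinuousOn φ (Icc c e)) :
    lsIntIcoC (fun x => ∑ l ∈ K, F l x) c e φ = ∑ l ∈ K, lsIntIcoC (F l) c e φ := by
  classical
  induction K using Finset.induction_on with
  | empty => simpa using lsIntIcoC_const hce 0 hφ
  | insert l K hl ih =>
    have hK : ∀ i ∈ K, IsStepFunctionOn (F i) c e := fun i hi => h i (Finset.mem_insert_of_mem hi)
    simp only [Finset.sum_insert hl]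
    rw [lsIntIcoC_add hce (h l (K.mem_insert_self l)) (IsStepFunctionOn.sum K hK) hφ, ih hK]

end ComplexStieltjes

section MatrixStieltjes

variable {d : ℕ} {c e : ℝ} {g : ℝ → Fin d → ℂ}

lemma lsIntIcoMV_add {F G : ℝ → Matrix (Fin d) (Fin d) ℂ} (hce : c ≤ e)
    (hF : IsStepFunctionOn F c e) (hG : IsStepFunctionOn G c e) (hg : ContinuousOn g (Icc c e)) :
    lsIntIcoMV (fun x => F x + G x) c e g = lsIntIcoMV F c e g + lsIntIcoMV G c e g := by
  funext i
  simp only [lsIntIcoMV, Pi.add_apply, Matrix.add_apply, ← Finset.sum_add_distrib]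
  exact Finset.sum_congr rfl fun k _ =>
    lsIntIcoC_add hce (hF.entry i k) (hG.entry i k) (continuousOn_pi.1 hg k)

lemma lsIntIcoMV_sum {ι : Type*} (hce : c ≤ e) (K : Finset ι)
    {F : ι → ℝ → Matrix (Fin d) (Fin d) ℂ} (hF : ∀ l ∈ K, IsStepFunctionOn (F l) c e)
    (hg : ContinuousOn g (Icc c e)) :
    lsIntIcoMV (fun x => ∑ l ∈ K, F l x) c e g = ∑ l ∈ K, lsIntIcoMV (F l) c e g := by
  funext i
  simp only [lsIntIcoMV, Finset.sum_apply, Matrix.sum_apply]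
  rw [Finset.sum_comm]
  exact Finset.sum_congr rfl fun k _ =>
    lsIntIcoC_sum hce K (fun l hl => (hF l hl).entry i k) (continuousOn_pi.1 hg k)

lemma lsIntIcoMV_mul_left {F : ℝ → Matrix (Fin d) (Fin d) ℂ} (hce : c ≤ e)
    (A : Matrix (Fin d) (Fin d) ℂ) (hF : IsStepFunctionOn F c e) (hg : ContinuousOn g (Icc c e)) :
    lsIntIcoMV (fun x => A * F x) c e g = A *ᵥ lsIntIcoMV F c e g := by
  funext i
  simp only [lsIntIcoMV, Matrix.mul_apply, Matrix.mulVec, dotProduct, Finset.mul_sum]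
  rw [Finset.sum_comm]
  refine Finset.sum_congr rfl fun k _ => ?_
  refine (lsIntIcoC_sum (F := fun m x => A i m * F x m k) hce _
    (fun m _ => (hF.entry m k).mul_left (A i m)) (continuousOn_pi.1 hg k)).trans ?_
  exact Finset.sum_congr rfl fun m _ => lsIntIcoC_const_mul hce _
    (hF.entry m k) (continuousOn_pi.1 hg k)

lemma lsIntIcoMV_ite_le {u : ℝ} (hcu : c ≤ u) (hce : c ≤ e) (A : Matrix (Fin d) (Fin d) ℂ)
    (hg : ContinuousOn g (Icc c e)) :
    lsIntIcoMV (fun x => if x ≤ u then A else 0) c e g = if u < e then -(A *ᵥ g u) else 0 := by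
  funext i
  have hentry : ∀ k, (fun x => (if x ≤ u then A else 0 : Matrix (Fin d) (Fin d) ℂ) i k) =
      fun x => if x ≤ u then A i k else 0 := fun k => funext fun x => by split_ifs <;> rfl
  simp only [lsIntIcoMV]
  rw [Finset.sum_congr rfl fun k _ => by
    rw [hentry k, lsIntIcoC_ite_le hcu hce _ (continuousOn_pi.1 hg k)]]
  split_ifs <;> simp [Matrix.mulVec, dotProduct]

lemma lsIntIcoMV_of_eqOn_zero {F : ℝ → Matrix (Fin d) (Fin d) ℂ} (hce : c ≤ e)
    (hF : EqOn F 0 (Icc c e)) (hg : ContinuousOn g (Icc c e)) : lsIntIcoMV F c e g = 0 := by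
  funext i
  refine Finset.sum_eq_zero fun k _ => ?_
  simpa using lsIntIcoC_eq_sum (f := fun x => F x i k) (p := Fin.elim0) (a := Fin.elim0) (b := 0)
    hce Fin.rec0 (fun x hx => by simp [hF hx]) (continuousOn_pi.1 hg k)

end MatrixStieltjes

lemma delay_induction {ι : Type*} [Finite ι] {τ : ι → ℝ} (hτ : ∀ j, 0 < τ j) {P : ℝ → Prop}
    {s : ℝ} (hbase : ∀ u < s, P u) (hstep : ∀ u, s ≤ u → (∀ j, P (u - τ j)) → P u) (u : ℝ) :
    P u := by
  obtain ⟨δ, hδ, hδτ⟩ : ∃ δ > 0, ∀ j, δ ≤ τ j := by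
    cases isEmpty_or_nonempty ι
    · exact ⟨1, one_pos, fun j => isEmptyElim j⟩
    · obtain ⟨j₀, hj₀⟩ := Finite.exists_min τ
      exact ⟨τ j₀, hτ j₀, hj₀⟩
  have hbefore : ∀ n : ℕ, ∀ u, u < s + n * δ → P u := by
    intro n
    induction n with
    | zero => simpa using hbase
    | succ n ih =>
      intro u hu
      rcases lt_or_ge u s with h | h
      · exact hbase u h
      · exact hstep u h fun j => ih _ (by push_cast at hu; linarith [hδτ j])
  obtain ⟨n, hn⟩ := exists_nat_gt ((u - s) / δ)
  exact hbefore n u (by rw [div_lt_iff₀ hδ] at hn; linarith)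

section DelaySystem

variable {d : ℕ} {ι : Type*} [Fintype ι] {τ : ι → ℝ} {D : ι → ℝ → Matrix (Fin d) (Fin d) ℂ}
  {X : ℝ → ℝ → Matrix (Fin d) (Fin d) ℂ}

lemma fundamental_eq (hτ : ∀ j, 0 < τ j) (hX0 : ∀ t α, t < α → X t α = 0)
    (hXrec : ∀ t α, α ≤ t → X t α = 1 + ∑ j, D j t * X (t - τ j) α) (t α : ℝ) :
    X t α = (if α ≤ t then 1 else 0) + ∑ j, D j t * X (t - τ j) α := by
  split_ifs with h
  · exact hXrec t α h
  · have hlt : t < α := not_le.1 h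
    simp [hX0 t α hlt, fun j => hX0 (t - τ j) α (by linarith [hτ j])]

lemma isStepFunctionOn_fundamental (hτ : ∀ j, 0 < τ j) (hX0 : ∀ t α, t < α → X t α = 0)
    (hXrec : ∀ t α, α ≤ t → X t α = 1 + ∑ j, D j t * X (t - τ j) α) (s e u : ℝ) :
    IsStepFunctionOn (X u) s e := by
  refine delay_induction hτ (P := fun u => IsStepFunctionOn (X u) s e)
    (fun u hu => (IsStepFunctionOn.const 0).congr fun α hα => (hX0 u α (hu.trans_le hα.1)).symm)
    (fun u hu ih => ?_) u
  rw [show X u = _ from funext (fundamental_eq hτ hX0 hXrec u)]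
  exact (IsStepFunctionOn.ite_le hu 1).add
    (IsStepFunctionOn.sum _ fun j _ => (ih j).mul_left (D j u))

lemma lsIntIcoMV_fundamental (hτ : ∀ j, 0 < τ j) (hX0 : ∀ t α, t < α → X t α = 0)
    (hXrec : ∀ t α, α ≤ t → X t α = 1 + ∑ j, D j t * X (t - τ j) α) {s e u : ℝ} (hsu : s ≤ u)
    (hse : s ≤ e) {g : ℝ → Fin d → ℂ} (hg : ContinuousOn g (Icc s e)) :
    lsIntIcoMV (X u) s e g =
      (if u < e then -g u else 0) + ∑ j, D j u *ᵥ lsIntIcoMV (X (u - τ j)) s e g := by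
  have hstep := isStepFunctionOn_fundamental hτ hX0 hXrec s e
  rw [show X u = _ from funext (fundamental_eq hτ hX0 hXrec u),
    lsIntIcoMV_add hse (IsStepFunctionOn.ite_le hsu 1)
      (IsStepFunctionOn.sum _ fun j _ => (hstep _).mul_left (D j u)) hg,
    lsIntIcoMV_ite_le hsu hse 1 hg, Matrix.one_mulVec,
    lsIntIcoMV_sum hse _ (fun j _ => (hstep _).mul_left (D j u)) hg]
  exact congrArg _ (Finset.sum_congr rfl fun j _ => lsIntIcoMV_mul_left hse _ (hstep _) hg)

def delayRepr (τ : ι → ℝ) (D : ι → ℝ → Matrix (Fin d) (Fin d) ℂ)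
    (X : ℝ → ℝ → Matrix (Fin d) (Fin d) ℂ) (s : ℝ) (φ : ℝ → Fin d → ℂ) (t : ℝ) : Fin d → ℂ :=
  -∑ j, lsIntIcoMV (X t) s (s + τ j) (fun α => (D j α).mulVec (φ (α - τ j - s)))

variable {s : ℝ} {φ : ℝ → Fin d → ℂ}

lemma delayRepr_of_lt (hτ : ∀ j, 0 < τ j) (hX0 : ∀ t α, t < α → X t α = 0)
    (hg : ∀ j, ContinuousOn (fun α => D j α *ᵥ φ (α - τ j - s)) (Icc s (s + τ j)))
    {u : ℝ} (hu : u < s) : delayRepr τ D X s φ u = 0 := by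
  simp only [delayRepr, neg_eq_zero]
  exact Finset.sum_eq_zero fun j _ => lsIntIcoMV_of_eqOn_zero (by linarith [hτ j])
    (fun α hα => hX0 u α (hu.trans_le hα.1)) (hg j)

lemma delayRepr_eq (hτ : ∀ j, 0 < τ j) (hX0 : ∀ t α, t < α → X t α = 0)
    (hXrec : ∀ t α, α ≤ t → X t α = 1 + ∑ j, D j t * X (t - τ j) α)
    (hg : ∀ j, ContinuousOn (fun α => D j α *ᵥ φ (α - τ j - s)) (Icc s (s + τ j)))
    {u : ℝ} (hsu : s ≤ u) :
    delayRepr τ D X s φ u =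
      ∑ j, D j u *ᵥ (if u - τ j < s then φ (u - τ j - s) else delayRepr τ D X s φ (u - τ j)) := by
  have hsplit : ∀ j, D j u *ᵥ (if u - τ j < s then φ (u - τ j - s)
      else delayRepr τ D X s φ (u - τ j)) = (if u < s + τ j then D j u *ᵥ φ (u - τ j - s) else 0)
        + D j u *ᵥ delayRepr τ D X s φ (u - τ j) := by
    intro j
    by_cases h : u - τ j < s
    · rw [if_pos h, if_pos (by linarith), delayRepr_of_lt hτ hX0 hg h, Matrix.mulVec_zero,
        add_zero]
    · rw [if_neg h, if_neg (by linarith), zero_add]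
  rw [Finset.sum_congr rfl fun j _ => hsplit j, Finset.sum_add_distrib, delayRepr,
    Finset.sum_congr rfl fun j _ =>
      lsIntIcoMV_fundamental hτ hX0 hXrec hsu (by linarith [hτ j]) (hg j),
    Finset.sum_add_distrib, neg_add, ← Finset.sum_neg_distrib, Finset.sum_comm]
  congr 1
  · exact Finset.sum_congr rfl fun j _ => by split_ifs <;> simp
  · simp only [delayRepr, Matrix.mulVec_neg, Matrix.mulVec_sum, Finset.sum_neg_distrib]

end DelaySystem

theorem representation_formula_general
    (d N : ℕ)
    (τ : Fin (N + 1) → ℝ) (hτpos : ∀ j, 0 < τ j) (hτmono : StrictMono τ)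
    (D : Fin (N + 1) → ℝ → Matrix (Fin d) (Fin d) ℂ) (hD : ∀ j, Continuous (D j))
    -- the fundamental solution
    (X : ℝ → ℝ → Matrix (Fin d) (Fin d) ℂ)
    (hX0 : ∀ t α : ℝ, t < α → X t α = 0)
    (hXrec : ∀ t α : ℝ, α ≤ t → X t α = 1 + ∑ j, D j t * X (t - τ j) α)
    -- the initial time and data
    (s : ℝ) (φ : ℝ → Fin d → ℂ)
    (hφcont : ContinuousOn φ (Icc (-(τ (Fin.last N))) 0))
    (hφcompat : φ 0 = ∑ j, (D j s).mulVec (φ (-(τ j))))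
    -- the continuous solution
    (y : ℝ → Fin d → ℂ)
    (hy0 : ∀ θ ∈ Icc (-(τ (Fin.last N))) 0, y (s + θ) = φ θ)
    (hy : ∀ t, s < t → y t = ∑ j, (D j t).mulVec (y (t - τ j))) :
    ∀ t : ℝ, s ≤ t →
      y t = -∑ j, lsIntIcoMV (X t) s (s + τ j)
        (fun α => (D j α).mulVec (φ (α - τ j - s))) := by
  have hτlast : ∀ j, τ j ≤ τ (Fin.last N) := fun j => hτmono.monotone (Fin.le_last j)
  have hyφ : ∀ j u, u - τ j ≤ s → s ≤ u → y (u - τ j) = φ (u - τ j - s) := fun j u h₁ h₂ => by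
    simpa using hy0 (u - τ j - s) ⟨by linarith [hτlast j], by linarith⟩
  have hg : ∀ j, ContinuousOn (fun α => D j α *ᵥ φ (α - τ j - s)) (Icc s (s + τ j)) :=
    fun j => (continuous_fst.matrix_mulVec continuous_snd).comp_continuousOn <|
      (hD j).continuousOn.prodMk <| hφcont.comp (Continuous.continuousOn (by fun_prop))
        fun α (hα : α ∈ Icc s (s + τ j)) => ⟨by linarith [hα.1, hτlast j], by linarith [hα.2]⟩
  have hyrec : ∀ u, s ≤ u → y u = ∑ j, D j u *ᵥ y (u - τ j) := by
    intro u hu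
    rcases hu.lt_or_eq with hu | rfl
    · exact hy u hu
    -- at `u = s` the recursion is the compatibility condition `φ ∈ C_s`
    · have hy₀ := hy0 0 ⟨by linarith [hτpos (Fin.last N)], le_rfl⟩
      rw [add_zero] at hy₀
      rw [hy₀, hφcompat]
      refine Finset.sum_congr rfl fun j _ => ?_
      rw [hyφ j s (by linarith [hτpos j]) le_rfl, sub_sub_cancel_left]
  intro t
  refine delay_induction hτpos (P := fun u => s ≤ u → y u = delayRepr τ D X s φ u)
    (fun u hu hsu => absurd hsu (not_le.2 hu)) (fun u hu ih _ => ?_) t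
  rw [hyrec u hu, delayRepr_eq hτpos hX0 hXrec hg hu]
  refine Finset.sum_congr rfl fun j _ => congrArg _ ?_
  split_ifs with h
  · exact hyφ j u h.le hu
  · exact ih j (not_lt.1 h)

/-- **Representation formula (Theorem 1.1).**

For every `s ∈ ℝ` and every `φ ∈ C_s`, the unique continuous solution
`y : [s - τ_N, ∞) → ℂ^d` of the difference-delay system satisfies, for all `t ≥ s`,
`y t = - ∑_{j} ∫_{[s, s+τ_j)} d_α X(t,α) (D_j(α) φ(α - τ_j - s))`,
where the integrals are Lebesgue–Stieltjes integrals over `[s, s+τ_j)` against the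
matrix-valued measure associated with the restriction of `α ↦ X(t,α)` to `[s, s+τ_j)`. -/
theorem representation_formula
    (d N : ℕ) (hd : 0 < d)
    (τ : Fin (N + 1) → ℝ) (hτpos : ∀ j, 0 < τ j) (hτmono : StrictMono τ)
    (D : Fin (N + 1) → ℝ → Matrix (Fin d) (Fin d) ℂ) (hD : ∀ j, Continuous (D j))
    -- the fundamental solution
    (X : ℝ → ℝ → Matrix (Fin d) (Fin d) ℂ)
    (hX0 : ∀ t α : ℝ, t < α → X t α = 0)
    (hXrec : ∀ t α : ℝ, α ≤ t → X t α = 1 + ∑ j, D j t * X (t - τ j) α)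
    -- the initial time and data
    (s : ℝ) (φ : ℝ → Fin d → ℂ)
    (hφcont : ContinuousOn φ (Icc (-(τ (Fin.last N))) 0))
    (hφcompat : φ 0 = ∑ j, (D j s).mulVec (φ (-(τ j))))
    -- the continuous solution
    (y : ℝ → Fin d → ℂ)
    (hycont : ContinuousOn y (Ici (s - τ (Fin.last N))))
    (hy0 : ∀ θ ∈ Icc (-(τ (Fin.last N))) 0, y (s + θ) = φ θ)
    (hy : ∀ t, s < t → y t = ∑ j, (D j t).mulVec (y (t - τ j))) :
    ∀ t : ℝ, s ≤ t →
      y t = -∑ j, lsIntIcoMV (X t) s (s + τ j)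
        (fun α => (D j α).mulVec (φ (α - τ j - s))) :=
  representation_formula_general d N τ hτpos hτmono D hD X hX0 hXrec s φ hφcont hφcompat y hy0 hy
end
end

section
/- The space K_{[a,b]} of Stieltjes–Volterra kernels of type B^∞ on [a,b]×[a,b], equipped with the norm ‖κ‖_{[a,b]} := sup_{t∈[a,b]} ‖κ(t,·)‖_{BV([a,b])}, is a Banach space: every Cauchy sequence (κ_k) in K_{[a,b]} converges in this norm to some κ ∈ K_{[a,b]}, and moreover κ_k → κ uniformly on [a,b]×[a,b]. -/
open MeasureTheory Set
open scoped ENNReal NNReal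
open scoped Matrix.Norms.L2Operator

noncomputable section

/-!
Every kernel vanishes at `τ = b`, so `κ(t,τ) = κ(t,τ) - κ(t,b)` is bounded by the variation of
`κ(t,·)`: the kernel norm dominates the sup norm on the square. A Cauchy sequence therefore has a
pointwise limit `κ`, and lower semicontinuity of the variation under pointwise convergence turns
the Cauchy estimate into `‖κ_k - κ‖ → 0`, hence also uniform convergence. The kernel properties
pass to `κ`: measurability and the Volterra condition as pointwise limits, left continuity as a
uniform limit, and both variation bounds through
`Var κ(t,·) ≤ Var κ_M(t,·) + Var (κ_M(t,·) - κ(t,·))`.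
-/

open Filter Topology

section Variation

variable {α E : Type*} [LinearOrder α]

theorem eVariationOn_le_add_eVariationOn_sub [SeminormedAddCommGroup E] (f g : α → E)
    (s : Set α) : eVariationOn g s ≤ eVariationOn f s + eVariationOn (f - g) s := by
  refine iSup_le fun ⟨n, u, hu, hus⟩ => ?_
  have hstep : ∀ x y, edist (g y) (g x) ≤ edist (f y) (f x) + edist ((f - g) y) ((f - g) x) := by
    intro x y
    have hg : g y - g x = (f y - f x) - ((f - g) y - (f - g) x) := by
      simp only [Pi.sub_apply]; abel
    rw [edist_eq_enorm_sub, edist_eq_enorm_sub, edist_eq_enorm_sub, hg]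
    exact enorm_sub_le
  calc ∑ i ∈ Finset.range n, edist (g (u (i + 1))) (g (u i))
      ≤ ∑ i ∈ Finset.range n, edist (f (u (i + 1))) (f (u i))
        + ∑ i ∈ Finset.range n, edist ((f - g) (u (i + 1))) ((f - g) (u i)) := by
        rw [← Finset.sum_add_distrib]
        exact Finset.sum_le_sum fun i _ => hstep _ _
    _ ≤ eVariationOn f s + eVariationOn (f - g) s :=
        add_le_add (eVariationOn.sum_le hu hus) (eVariationOn.sum_le hu hus)

theorem enorm_le_eVariationOn_of_eq_zero [SeminormedAddCommGroup E] {f : α → E} {s : Set α}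
    {x y : α} (hx : x ∈ s) (hy : y ∈ s) (hfy : f y = 0) : ‖f x‖ₑ ≤ eVariationOn f s := by
  simpa [hfy] using eVariationOn.edist_le f hx hy

theorem eVariationOn_le_of_tendsto [PseudoEMetricSpace E] {ι : Type*} {p : Filter ι} [p.NeBot]
    {F : ι → α → E} {f : α → E} {s : Set α} {C : ℝ≥0∞}
    (hF : ∀ x ∈ s, Tendsto (F · x) p (𝓝 (f x))) (hC : ∀ᶠ i in p, eVariationOn (F i) s ≤ C) :
    eVariationOn f s ≤ C := by
  by_contra! hlt
  obtain ⟨i, hi, hiC⟩ := ((eVariationOn.lowerSemicontinuous_aux hF hlt).and hC).exists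
  exact (hi.trans_le hiC).false

end Variation

theorem TendstoUniformlyOn.continuousWithinAt_of_insert_subset {α β ι : Type*}
    [TopologicalSpace α] [UniformSpace β] {F : ι → α → β} {f : α → β} {p : Filter ι} [p.NeBot]
    {s t : Set α} {x : α} (h : TendstoUniformlyOn F f p t) (hst : insert x s ⊆ t)
    (hF : ∀ i, ContinuousWithinAt (F i) s x) : ContinuousWithinAt f s x := by
  rw [← continuousWithinAt_insert_self]
  refine continuousWithinAt_of_locally_uniform_approx_of_continuousWithinAt (mem_insert x s)
    fun u hu => ?_
  obtain ⟨i, hi⟩ := (h u hu).exists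
  exact ⟨insert x s, self_mem_nhdsWithin, F i, (hF i).insert, fun y hy => hi y (hst hy)⟩

section Kernel

variable {d : ℕ} {a b : ℝ} {κ ρ : ℝ → ℝ → Matrix (Fin d) (Fin d) ℂ} {t τ : ℝ}

theorem eVariationOn_le_KNorm (ht : t ∈ Icc a b) :
    eVariationOn (κ t) (Icc a b) ≤ KNorm d a b κ :=
  le_iSup₂_of_le (f := fun t _ => eVariationOn (κ t) (Icc a b)) t ht le_rfl

theorem KNorm_le_add_KNorm_sub :
    KNorm d a b κ ≤ KNorm d a b ρ + KNorm d a b (ρ - κ) :=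
  iSup₂_le fun t ht => (eVariationOn_le_add_eVariationOn_sub (ρ t) (κ t) _).trans
    (add_le_add (eVariationOn_le_KNorm ht) (eVariationOn_le_KNorm (κ := ρ - κ) ht))

theorem enorm_le_KNorm_of_apply_right_eq_zero (hκ : ∀ t ∈ Icc a b, κ t b = 0)
    (ht : t ∈ Icc a b) (hτ : τ ∈ Icc a b) : ‖κ t τ‖ₑ ≤ KNorm d a b κ :=
  (enorm_le_eVariationOn_of_eq_zero hτ ⟨hτ.1.trans hτ.2, le_rfl⟩ (hκ t ht)).trans
    (eVariationOn_le_KNorm ht)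

theorem IsSVKernel.apply_right_eq_zero (hκ : IsSVKernel d a b κ) (ht : t ∈ Icc a b) :
    κ t b = 0 :=
  hκ.2.1 t ht b ⟨ht.1.trans ht.2, le_rfl⟩ ht.2

theorem exists_eVariationOn_le_ofReal_iff_KNorm_lt_top :
    (∃ C : ℝ, ∀ t ∈ Icc a b, eVariationOn (κ t) (Icc a b) ≤ ENNReal.ofReal C) ↔
      KNorm d a b κ < ⊤ := by
  constructor
  · rintro ⟨C, hC⟩
    exact (iSup₂_le hC).trans_lt ENNReal.ofReal_lt_top
  · intro h
    exact ⟨(KNorm d a b κ).toReal, fun t ht =>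
      (ENNReal.ofReal_toReal h.ne).symm ▸ eVariationOn_le_KNorm ht⟩

end Kernel

instance matrixBorelSpace {d : ℕ} : BorelSpace (Matrix (Fin d) (Fin d) ℂ) :=
  inferInstanceAs (BorelSpace (Fin d → Fin d → ℂ))

section Limit

variable {d : ℕ} {a b : ℝ} {κs : ℕ → ℝ → ℝ → Matrix (Fin d) (Fin d) ℂ}
  {κ : ℝ → ℝ → Matrix (Fin d) (Fin d) ℂ}

theorem exists_tendsto_of_KNorm_cauchy (hzero : ∀ k, ∀ t ∈ Icc a b, κs k t b = 0)
    (hcauchy : ∀ ε : ℝ, 0 < ε → ∃ M : ℕ, ∀ k l : ℕ, M ≤ k → M ≤ l →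
      KNorm d a b (fun t τ => κs k t τ - κs l t τ) < ENNReal.ofReal ε) :
    ∃ κ : ℝ → ℝ → Matrix (Fin d) (Fin d) ℂ, ∀ t ∈ Icc a b, ∀ τ ∈ Icc a b,
      Tendsto (fun k => κs k t τ) atTop (𝓝 (κ t τ)) := by
  refine ⟨fun t τ => limUnder atTop (fun k => κs k t τ), fun t ht τ hτ => ?_⟩
  refine CauchySeq.tendsto_limUnder (Metric.cauchySeq_iff.2 fun ε hε => ?_)
  obtain ⟨M, hM⟩ := hcauchy ε hε
  refine ⟨M, fun k hk l hl => edist_lt_ofReal.1 ?_⟩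
  rw [edist_eq_enorm_sub]
  refine (enorm_le_KNorm_of_apply_right_eq_zero (κ := fun t τ => κs k t τ - κs l t τ)
    (fun t ht => ?_) ht hτ).trans_lt (hM k l hk hl)
  simp only [hzero k t ht, hzero l t ht, sub_zero]

theorem tendsto_KNorm_sub_of_cauchy
    (hcauchy : ∀ ε : ℝ, 0 < ε → ∃ M : ℕ, ∀ k l : ℕ, M ≤ k → M ≤ l →
      KNorm d a b (fun t τ => κs k t τ - κs l t τ) < ENNReal.ofReal ε)
    (hconv : ∀ t ∈ Icc a b, ∀ τ ∈ Icc a b, Tendsto (fun k => κs k t τ) atTop (𝓝 (κ t τ))) :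
    Tendsto (fun k => KNorm d a b (fun t τ => κs k t τ - κ t τ)) atTop (𝓝 0) := by
  refine ENNReal.tendsto_atTop_zero.2 fun ε hε => ?_
  obtain ⟨r, -, hr, hrε⟩ := ENNReal.lt_iff_exists_real_btwn.1 hε
  obtain ⟨M, hM⟩ := hcauchy r (ENNReal.ofReal_pos.1 hr)
  refine ⟨M, fun k hk => iSup₂_le fun t ht => ?_⟩
  refine eVariationOn_le_of_tendsto (F := fun l τ => κs k t τ - κs l t τ)
    (fun τ hτ => tendsto_const_nhds.sub (hconv t ht τ hτ)) ?_
  filter_upwards [eventually_ge_atTop M] with l hl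
  exact (eVariationOn_le_KNorm (κ := fun t τ => κs k t τ - κs l t τ) ht).trans
    ((hM k l hk hl).le.trans hrε.le)

theorem tendstoUniformlyOn_of_tendsto_KNorm_sub (hzero : ∀ k, ∀ t ∈ Icc a b, κs k t b = 0)
    (hκzero : ∀ t ∈ Icc a b, κ t b = 0)
    (hlim : Tendsto (fun k => KNorm d a b (fun t τ => κs k t τ - κ t τ)) atTop (𝓝 0)) :
    TendstoUniformlyOn (fun k p => κs k p.1 p.2) (fun p => κ p.1 p.2) atTop
      (Icc a b ×ˢ Icc a b) := by
  refine EMetric.tendstoUniformlyOn_iff.2 fun ε hε => ?_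
  filter_upwards [hlim.eventually (gt_mem_nhds hε)] with k hk
  rintro ⟨t, τ⟩ ⟨ht, hτ⟩
  rw [edist_comm, edist_eq_enorm_sub]
  refine (enorm_le_KNorm_of_apply_right_eq_zero (κ := fun t τ => κs k t τ - κ t τ)
    (fun t ht => ?_) ht hτ).trans_lt hk
  simp only [hzero k t ht, hκzero t ht, sub_zero]

theorem IsSVKernel.of_tendstoUniformlyOn (hker : ∀ k, IsSVKernel d a b (κs k))
    (hunif : TendstoUniformlyOn (fun k p => κs k p.1 p.2) (fun p => κ p.1 p.2) atTop
      (Icc a b ×ˢ Icc a b))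
    (hlim : Tendsto (fun k => KNorm d a b (fun t τ => κs k t τ - κ t τ)) atTop (𝓝 0)) :
    IsSVKernel d a b κ := by
  refine ⟨?_, ?_, ?_, ?_, ?_⟩
  · exact measurable_of_tendsto_metrizable (fun k => (hker k).1)
      (tendsto_pi_nhds.2 fun p => hunif.tendsto_at p.2)
  · intro t ht τ hτ htτ
    refine tendsto_nhds_unique (hunif.tendsto_at (x := (t, τ)) ⟨ht, hτ⟩) ?_
    simp only [(hker _).2.1 t ht τ hτ htτ]
    exact tendsto_const_nhds
  · intro t ht x hx
    have hunif_t : TendstoUniformlyOn (fun k => κs k t) (κ t) atTop (Icc a b) :=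
      (hunif.comp (Prod.mk t)).mono fun τ hτ => ⟨ht, hτ⟩
    exact hunif_t.continuousWithinAt_of_insert_subset (insert_subset hx inter_subset_left)
      fun k => (hker k).2.2.1 t ht x hx
  · obtain ⟨M, hM⟩ := (hlim.eventually (gt_mem_nhds ENNReal.zero_lt_top)).exists
    exact exists_eVariationOn_le_ofReal_iff_KNorm_lt_top.2
      ((KNorm_le_add_KNorm_sub (ρ := κs M)).trans_lt (ENNReal.add_lt_top.2
        ⟨exists_eVariationOn_le_ofReal_iff_KNorm_lt_top.1 (hker M).2.2.2.1, hM⟩))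
  · intro ε hε
    obtain ⟨M, hM⟩ := (hlim.eventually (gt_mem_nhds (ENNReal.ofReal_pos.2 (half_pos hε)))).exists
    obtain ⟨η, hη, hηM⟩ := (hker M).2.2.2.2 (ε / 2) (half_pos hε)
    refine ⟨η, hη, fun t ht τ hτ hpos hlt => ?_⟩
    have hsub : Ico τ t ⊆ Icc a b := Ico_subset_Icc_self.trans (Icc_subset_Icc hτ.1 ht.2)
    calc eVariationOn (κ t) (Ico τ t)
        ≤ eVariationOn (κs M t) (Ico τ t) + eVariationOn (κs M t - κ t) (Ico τ t) :=
          eVariationOn_le_add_eVariationOn_sub _ _ _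
      _ < ENNReal.ofReal (ε / 2) + ENNReal.ofReal (ε / 2) :=
          ENNReal.add_lt_add (hηM t ht τ hτ hpos hlt)
            (((eVariationOn.mono _ hsub).trans
              (eVariationOn_le_KNorm (κ := fun t τ => κs M t τ - κ t τ) ht)).trans_lt hM)
      _ = ENNReal.ofReal ε := by
          rw [← ENNReal.ofReal_add (half_pos hε).le (half_pos hε).le, add_halves]

end Limit

theorem svKernel_space_complete_general
    (d : ℕ) (a b : ℝ)
    (κs : ℕ → ℝ → ℝ → Matrix (Fin d) (Fin d) ℂ)
    (hker : ∀ k, IsSVKernel d a b (κs k))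
    (hcauchy : ∀ ε : ℝ, 0 < ε → ∃ M : ℕ, ∀ k l : ℕ, M ≤ k → M ≤ l →
      KNorm d a b (fun t τ => κs k t τ - κs l t τ) < ENNReal.ofReal ε) :
    ∃ κ : ℝ → ℝ → Matrix (Fin d) (Fin d) ℂ,
      IsSVKernel d a b κ ∧
      -- convergence in the kernel norm
      (∀ ε : ℝ, 0 < ε → ∃ M : ℕ, ∀ k : ℕ, M ≤ k →
        KNorm d a b (fun t τ => κs k t τ - κ t τ) < ENNReal.ofReal ε) ∧
      -- uniform convergence on the square
      (∀ ε : ℝ, 0 < ε → ∃ M : ℕ, ∀ k : ℕ, M ≤ k →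
        ∀ t ∈ Icc a b, ∀ τ ∈ Icc a b, ‖κs k t τ - κ t τ‖ < ε) := by
  have hzero : ∀ k, ∀ t ∈ Icc a b, κs k t b = 0 := fun k t ht =>
    (hker k).apply_right_eq_zero ht
  obtain ⟨κ, hconv⟩ := exists_tendsto_of_KNorm_cauchy hzero hcauchy
  have hκzero : ∀ t ∈ Icc a b, κ t b = 0 := fun t ht =>
    tendsto_nhds_unique (hconv t ht b ⟨ht.1.trans ht.2, le_rfl⟩)
      (by simp only [hzero _ t ht]; exact tendsto_const_nhds)
  have hlim := tendsto_KNorm_sub_of_cauchy hcauchy hconv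
  have hunif := tendstoUniformlyOn_of_tendsto_KNorm_sub hzero hκzero hlim
  refine ⟨κ, .of_tendstoUniformlyOn hker hunif hlim, fun ε hε => ?_, fun ε hε => ?_⟩
  · exact eventually_atTop.1 (hlim.eventually (gt_mem_nhds (ENNReal.ofReal_pos.2 hε)))
  · obtain ⟨M, hM⟩ := eventually_atTop.1 (Metric.tendstoUniformlyOn_iff.1 hunif ε hε)
    exact ⟨M, fun k hk t ht τ hτ => by simpa [dist_eq_norm'] using hM k hk (t, τ) ⟨ht, hτ⟩⟩

/-- **Completeness of the space of Stieltjes–Volterra kernels of type `B^∞`.**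

Every Cauchy sequence `κ k` in `K_{[a,b]}` (for the norm
`‖κ‖_{[a,b]} = sup_t ‖κ(t,·)‖_{BV([a,b])}`) converges in this norm to some
`κ ∈ K_{[a,b]}`, and moreover `κ k → κ` uniformly on `[a,b] × [a,b]`. -/
theorem svKernel_space_complete
    (d : ℕ) (hd : 0 < d) (a b : ℝ) (hab : a < b)
    (κs : ℕ → ℝ → ℝ → Matrix (Fin d) (Fin d) ℂ)
    (hker : ∀ k, IsSVKernel d a b (κs k))
    (hcauchy : ∀ ε : ℝ, 0 < ε → ∃ M : ℕ, ∀ k l : ℕ, M ≤ k → M ≤ l →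
      KNorm d a b (fun t τ => κs k t τ - κs l t τ) < ENNReal.ofReal ε) :
    ∃ κ : ℝ → ℝ → Matrix (Fin d) (Fin d) ℂ,
      IsSVKernel d a b κ ∧
      -- convergence in the kernel norm
      (∀ ε : ℝ, 0 < ε → ∃ M : ℕ, ∀ k : ℕ, M ≤ k →
        KNorm d a b (fun t τ => κs k t τ - κ t τ) < ENNReal.ofReal ε) ∧
      -- uniform convergence on the square
      (∀ ε : ℝ, 0 < ε → ∃ M : ℕ, ∀ k : ℕ, M ≤ k →
        ∀ t ∈ Icc a b, ∀ τ ∈ Icc a b, ‖κs k t τ - κ t τ‖ < ε) :=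
  svKernel_space_complete_general d a b κs hker hcauchy

end
end

section
/- Let κ be a Stieltjes–Volterra kernel of type B^∞ on [a,b]×[a,b]. If z : [a,b] → ℂ^d is bounded and measurable and satisfies the homogeneous Volterra equation z(t) = ∫_{(a,t)} dκ(t,τ) z(τ) for all a ≤ t ≤ b (the integral being over the open interval (a,t)), then z vanishes identically on [a,b]. -/
open MeasureTheory Set
open scoped ENNReal NNReal
open scoped Matrix.Norms.L2Operator

noncomputable section

instance eucCMeasurableSpace {d : ℕ} : MeasurableSpace (EuclideanSpace ℂ (Fin d)) :=
  MeasurableSpace.comap (WithLp.ofLp (p := 2)) MeasurableSpace.pi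

/-- Reinterpret a vector of `Fin d → ℂ` as an element of `ℂ^d` with the
Euclidean norm (the types are definitionally equal). -/
def toEuc {d : ℕ} (v : Fin d → ℂ) : EuclideanSpace ℂ (Fin d) := WithLp.toLp 2 v


/-! If `z` vanishes on `[a, c]`, then for `t ∈ (c, c + η]` the equation only integrates `z` over
`(c, t)`, where `κ(t,·)` has variation at most `ε` (the Jordan parts of each entry put mass at most
that variation on `(c, t)`). Hence `‖z‖ ≤ 8 d² ε S` on `(c, c + η]`, `S` being the supremum of `‖z‖`
there, and `8 d² ε < 1` forces `S = 0`. Starting from `z a = 0` (an integral over `(a, a) = ∅`) and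
stepping by `η` covers `[a, b]`. -/

lemma varFun_sub_varFun (f : ℝ → ℝ) {a t x y : ℝ} (hfin : BoundedVariationOn f (Icc a t))
    (hax : a ≤ x) (hxy : x ≤ y) (hyt : y ≤ t) :
    varFun f a t y - varFun f a t x = (eVariationOn f (Icc x y)).toReal := by
  have hclamp : ∀ u ∈ Icc a t, eVariationOn (clampOn f a t) (Icc a u) = eVariationOn f (Icc a u) :=
    fun u hu => eVariationOn.eq_of_eqOn fun w hw => by
      simp [clampOn, min_eq_left (hw.2.trans hu.2), max_eq_right hw.1]
  have hadd : eVariationOn f (Icc a x) + eVariationOn f (Icc x y) = eVariationOn f (Icc a y) := by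
    simpa using eVariationOn.Icc_add_Icc f (s := univ) hax hxy (mem_univ x)
  simp only [varFun]
  rw [hclamp x ⟨hax, hxy.trans hyt⟩, hclamp y ⟨hax.trans hxy, hyt⟩, ← hadd,
    ENNReal.toReal_add (hfin.mono (Icc_subset_Icc_right (hxy.trans hyt)))
      (hfin.mono (Icc_subset_Icc hax hyt))]
  ring

lemma abs_clampOn_sub_le (f : ℝ → ℝ) {a t x y : ℝ} (hfin : BoundedVariationOn f (Icc a t))
    (hax : a ≤ x) (hxy : x ≤ y) (hyt : y ≤ t) :
    |clampOn f a t y - clampOn f a t x| ≤ (eVariationOn f (Icc x y)).toReal := by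
  have hfin_xy : BoundedVariationOn f (Icc x y) := hfin.mono (Icc_subset_Icc hax hyt)
  have hedist := eVariationOn.edist_le f (s := Icc x y) ⟨le_rfl, hxy⟩ ⟨hxy, le_rfl⟩
  rw [edist_dist, Real.dist_eq, ← ENNReal.ofReal_toReal hfin_xy,
    ENNReal.ofReal_le_ofReal_iff ENNReal.toReal_nonneg, abs_sub_comm] at hedist
  simpa [clampOn, min_eq_left hyt, max_eq_right (hax.trans hxy), min_eq_left (hxy.trans hyt),
    max_eq_right hax] using hedist

lemma posPartFun_sub_le (f : ℝ → ℝ) {a t x y : ℝ} (hfin : BoundedVariationOn f (Icc a t))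
    (hax : a ≤ x) (hxy : x ≤ y) (hyt : y ≤ t) :
    posPartFun f a t y - posPartFun f a t x ≤ varFun f a t y - varFun f a t x := by
  have := (abs_le.1 (abs_clampOn_sub_le f hfin hax hxy hyt)).2
  rw [← varFun_sub_varFun f hfin hax hxy hyt] at this
  simp only [posPartFun]
  linarith

lemma negPartFun_sub_le (f : ℝ → ℝ) {a t x y : ℝ} (hfin : BoundedVariationOn f (Icc a t))
    (hax : a ≤ x) (hxy : x ≤ y) (hyt : y ≤ t) :
    negPartFun f a t y - negPartFun f a t x ≤ varFun f a t y - varFun f a t x := by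
  have := (abs_le.1 (abs_clampOn_sub_le f hfin hax hxy hyt)).1
  rw [← varFun_sub_varFun f hfin hax hxy hyt] at this
  simp only [negPartFun]
  linarith

lemma monoMeasure_Ioo_le_eVariationOn (f q : ℝ → ℝ) {a c t : ℝ} (hac : a ≤ c) (hct : c < t)
    (hfin : BoundedVariationOn f (Icc a t))
    (hq : ∀ x y, a ≤ x → x ≤ y → y ≤ t → q y - q x ≤ varFun f a t y - varFun f a t x) :
    monoMeasure q (Ioo c t) ≤ eVariationOn f (Ico c t) := by
  unfold monoMeasure
  split_ifs with hmono
  swap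
  · simp
  have hfin_Ico : BoundedVariationOn f (Ico c t) :=
    hfin.mono (Ico_subset_Icc_self.trans (Icc_subset_Icc_left hac))
  set w := (eVariationOn f (Ico c t)).toReal
  have hq_le : ∀ y ∈ Ico c t, q y ≤ q c + w := fun y hy => by
    have h := hq c y hac hy.1 hy.2.le
    rw [varFun_sub_varFun f hfin hac hy.1 hy.2.le] at h
    have : (eVariationOn f (Icc c y)).toReal ≤ w :=
      ENNReal.toReal_mono hfin_Ico (eVariationOn.mono f (Icc_subset_Ico_right hy.2))
    linarith
  set F := hmono.stieltjesFunction
  have hF_le : ∀ y ∈ Ioo c t, F y ≤ q c + w := fun y hy => by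
    obtain ⟨y', hyy', hy't⟩ := exists_between hy.2
    rw [hmono.stieltjesFunction_eq]
    exact (hmono.rightLim_le hyy').trans (hq_le y' ⟨hy.1.le.trans hyy'.le, hy't⟩)
  have hleft : Function.leftLim F t ≤ q c + w :=
    le_of_tendsto (F.mono.tendsto_leftLim t) <| by
      filter_upwards [Ioo_mem_nhdsLT hct] with y hy using hF_le y hy
  have hc : q c ≤ F c := by
    rw [hmono.stieltjesFunction_eq]; exact hmono.le_rightLim le_rfl
  rw [StieltjesFunction.measure_Ioo]
  calc ENNReal.ofReal (Function.leftLim F t - F c) ≤ ENNReal.ofReal w :=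
        ENNReal.ofReal_le_ofReal (by linarith)
    _ = eVariationOn f (Ico c t) := ENNReal.ofReal_toReal hfin_Ico

lemma abs_lsIntIooR_le (f φ : ℝ → ℝ) {a c t S : ℝ} (hac : a ≤ c) (hct : c < t)
    (hfin : BoundedVariationOn f (Icc a t)) (hφ0 : ∀ τ ∈ Ioc a c, φ τ = 0)
    (hφS : ∀ τ ∈ Ioo c t, |φ τ| ≤ S) (hS : 0 ≤ S) :
    |lsIntIooR f a t φ| ≤ 2 * S * (eVariationOn f (Ico c t)).toReal := by
  have hfin_Ico : BoundedVariationOn f (Ico c t) :=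
    hfin.mono (Ico_subset_Icc_self.trans (Icc_subset_Icc_left hac))
  have key : ∀ q : ℝ → ℝ,
      (∀ x y, a ≤ x → x ≤ y → y ≤ t → q y - q x ≤ varFun f a t y - varFun f a t x) →
      |∫ x in Ioo a t, φ x ∂monoMeasure q| ≤ S * (eVariationOn f (Ico c t)).toReal := by
    intro q hq
    have hμ := monoMeasure_Ioo_le_eVariationOn f q hac hct hfin hq
    have hφ0' : ∀ x ∈ Ioo a t \ Ioo c t, φ x = 0 := fun x hx =>
      hφ0 x ⟨hx.1.1, not_lt.1 fun hcx => hx.2 ⟨hcx, hx.1.2⟩⟩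
    rw [setIntegral_eq_of_subset_of_forall_sdiff_eq_zero measurableSet_Ioo
      (Ioo_subset_Ioo_left hac) hφ0', ← Real.norm_eq_abs]
    calc ‖∫ x in Ioo c t, φ x ∂monoMeasure q‖ ≤ S * (monoMeasure q).real (Ioo c t) :=
          norm_setIntegral_le_of_norm_le_const (hμ.trans_lt hfin_Ico.lt_top) hφS
      _ ≤ S * (eVariationOn f (Ico c t)).toReal := by
          gcongr
          exact ENNReal.toReal_mono hfin_Ico hμ
  calc |lsIntIooR f a t φ| ≤ |∫ x in Ioo a t, φ x ∂monoMeasure (posPartFun f a t)|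
        + |∫ x in Ioo a t, φ x ∂monoMeasure (negPartFun f a t)| := abs_sub _ _
    _ ≤ 2 * S * (eVariationOn f (Ico c t)).toReal := by
        linarith [key _ fun x y => posPartFun_sub_le f hfin,
          key _ fun x y => negPartFun_sub_le f hfin]

lemma eVariationOn_comp_le_of_lipschitzWith_one {α E F : Type*} [LinearOrder α]
    [PseudoEMetricSpace E] [PseudoEMetricSpace F] {g : E → F} (hg : LipschitzWith 1 g)
    (f : α → E) (s : Set α) :
    eVariationOn (g ∘ f) s ≤ eVariationOn f s := by
  simpa using (hg.lipschitzOnWith (s := univ)).comp_eVariationOn_le (mapsTo_univ f s)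

lemma norm_lsIntIooC_le (f φ : ℝ → ℂ) {a c t S : ℝ} (hac : a ≤ c) (hct : c < t)
    (hfin : BoundedVariationOn f (Icc a t)) (hφ0 : ∀ τ ∈ Ioc a c, φ τ = 0)
    (hφS : ∀ τ ∈ Ioo c t, ‖φ τ‖ ≤ S) (hS : 0 ≤ S) :
    ‖lsIntIooC f a t φ‖ ≤ 8 * S * (eVariationOn f (Ico c t)).toReal := by
  have hfin_Ico : BoundedVariationOn f (Ico c t) :=
    hfin.mono (Ico_subset_Icc_self.trans (Icc_subset_Icc_left hac))
  have hpart : ∀ (p : ℂ → ℝ), LipschitzWith 1 p → ∀ ψ : ℝ → ℝ,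
      (∀ τ ∈ Ioc a c, ψ τ = 0) → (∀ τ ∈ Ioo c t, |ψ τ| ≤ S) →
      |lsIntIooR (p ∘ f) a t ψ| ≤ 2 * S * (eVariationOn f (Ico c t)).toReal := by
    intro p hp ψ hψ0 hψS
    refine (abs_lsIntIooR_le _ ψ hac hct ?_ hψ0 hψS hS).trans ?_
    · exact ne_top_of_le_ne_top hfin (eVariationOn_comp_le_of_lipschitzWith_one hp f _)
    · gcongr
      exact eVariationOn_comp_le_of_lipschitzWith_one hp f _
  have hre0 : ∀ τ ∈ Ioc a c, (φ τ).re = 0 := fun τ hτ => by simp [hφ0 τ hτ]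
  have him0 : ∀ τ ∈ Ioc a c, (φ τ).im = 0 := fun τ hτ => by simp [hφ0 τ hτ]
  have hreS : ∀ τ ∈ Ioo c t, |(φ τ).re| ≤ S := fun τ hτ =>
    (Complex.abs_re_le_norm _).trans (hφS τ hτ)
  have himS : ∀ τ ∈ Ioo c t, |(φ τ).im| ≤ S := fun τ hτ =>
    (Complex.abs_im_le_norm _).trans (hφS τ hτ)
  have h₁ : |lsIntIooR (fun x => (f x).re) a t fun τ => (φ τ).re| ≤ _ :=
    hpart _ RCLike.lipschitzWith_re _ hre0 hreS
  have h₂ : |lsIntIooR (fun x => (f x).im) a t fun τ => (φ τ).im| ≤ _ :=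
    hpart _ RCLike.lipschitzWith_im _ him0 himS
  have h₃ : |lsIntIooR (fun x => (f x).re) a t fun τ => (φ τ).im| ≤ _ :=
    hpart _ RCLike.lipschitzWith_re _ him0 himS
  have h₄ : |lsIntIooR (fun x => (f x).im) a t fun τ => (φ τ).re| ≤ _ :=
    hpart _ RCLike.lipschitzWith_im _ hre0 hreS
  unfold lsIntIooC
  refine (norm_add_le _ _).trans ?_
  rw [norm_mul, Complex.norm_I, one_mul, ← Complex.ofReal_sub, ← Complex.ofReal_add,
    Complex.norm_real, Complex.norm_real, Real.norm_eq_abs, Real.norm_eq_abs]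
  linarith [abs_sub _ _ |>.trans (add_le_add h₁ h₂), abs_add_le _ _ |>.trans (add_le_add h₃ h₄)]

lemma Matrix.norm_apply_le_l2_opNorm {𝕜 m n : Type*} [RCLike 𝕜] [Fintype m] [Fintype n]
    [DecidableEq n] (A : Matrix m n 𝕜) (i : m) (j : n) : ‖A i j‖ ≤ ‖A‖ := by
  have h := A.l2_opNorm_mulVec (EuclideanSpace.single j 1)
  rw [PiLp.norm_single, norm_one, mul_one] at h
  refine le_trans (le_of_eq ?_) ((PiLp.norm_apply_le _ i).trans h)
  simp [EuclideanSpace.single]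

lemma EuclideanSpace.norm_le_sum_norm {𝕜 ι : Type*} [RCLike 𝕜] [Fintype ι]
    (v : EuclideanSpace 𝕜 ι) : ‖v‖ ≤ ∑ i, ‖v i‖ := by
  rw [EuclideanSpace.norm_eq]
  calc √(∑ i, ‖v i‖ ^ 2) ≤ √((∑ i, ‖v i‖) ^ 2) :=
        Real.sqrt_le_sqrt (Finset.sum_sq_le_sq_sum_of_nonneg fun i _ => norm_nonneg _)
    _ = ∑ i, ‖v i‖ := Real.sqrt_sq (Finset.sum_nonneg fun i _ => norm_nonneg _)

lemma norm_lsIntIooMV_le {d : ℕ} (F : ℝ → Matrix (Fin d) (Fin d) ℂ)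
    (g : ℝ → EuclideanSpace ℂ (Fin d)) {a c t S : ℝ} (hac : a ≤ c) (hct : c < t)
    (hfin : BoundedVariationOn F (Icc a t)) (hg0 : ∀ τ ∈ Ioc a c, g τ = 0)
    (hgS : ∀ τ ∈ Ioo c t, ‖g τ‖ ≤ S) (hS : 0 ≤ S) :
    ‖toEuc (lsIntIooMV F a t fun τ => g τ)‖
      ≤ 8 * d ^ 2 * S * (eVariationOn F (Ico c t)).toReal := by
  have hentry : ∀ i j, eVariationOn (fun τ => F τ i j) ≤ eVariationOn F := fun i j s =>
    eVariationOn_comp_le_of_lipschitzWith_one (g := fun A : Matrix (Fin d) (Fin d) ℂ => A i j)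
      (LipschitzWith.of_dist_le_mul fun A B => by
        simpa [dist_eq_norm] using (A - B).norm_apply_le_l2_opNorm i j) F s
  have hfin_Ico : BoundedVariationOn F (Ico c t) :=
    hfin.mono (Ico_subset_Icc_self.trans (Icc_subset_Icc_left hac))
  have hcoeff : ∀ i j, ‖lsIntIooC (fun τ => F τ i j) a t fun τ => g τ j‖
      ≤ 8 * S * (eVariationOn F (Ico c t)).toReal := fun i j => by
    refine (norm_lsIntIooC_le _ _ hac hct (ne_top_of_le_ne_top hfin (hentry i j _))
      (fun τ hτ => by simp [hg0 τ hτ]) (fun τ hτ => (PiLp.norm_apply_le _ j).trans (hgS τ hτ))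
      hS).trans ?_
    gcongr
    exact hentry i j _
  calc ‖toEuc (lsIntIooMV F a t fun τ => g τ)‖
      ≤ ∑ i, ∑ j, ‖lsIntIooC (fun τ => F τ i j) a t fun τ => g τ j‖ :=
        (EuclideanSpace.norm_le_sum_norm _).trans
          (Finset.sum_le_sum fun i _ => norm_sum_le (E := ℂ) _ _)
    _ ≤ ∑ _i : Fin d, ∑ _j : Fin d, 8 * S * (eVariationOn F (Ico c t)).toReal := by
        gcongr with i _ j _
        exact hcoeff i j
    _ = 8 * d ^ 2 * S * (eVariationOn F (Ico c t)).toReal := by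
        simp only [Finset.sum_const, Finset.card_univ, Fintype.card_fin, nsmul_eq_mul]
        ring

lemma lsIntIooMV_self {d : ℕ} (F : ℝ → Matrix (Fin d) (Fin d) ℂ) (c : ℝ) (g : ℝ → Fin d → ℂ) :
    lsIntIooMV F c c g = 0 := by
  funext i
  simp [lsIntIooMV, lsIntIooC, lsIntIooR]

lemma eq_zero_of_forall_norm_le_mul_bound {α E : Type*} [NormedAddCommGroup E] {s : Set α}
    {f : α → E} {q : ℝ} (hq : q < 1) (hbdd : ∃ C, ∀ x ∈ s, ‖f x‖ ≤ C)
    (h : ∀ S, (∀ x ∈ s, ‖f x‖ ≤ S) → ∀ x ∈ s, ‖f x‖ ≤ q * S) : ∀ x ∈ s, f x = 0 := by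
  intro x hx
  obtain ⟨C, hC⟩ := hbdd
  have hbdd' : BddAbove ((‖f ·‖) '' s) := ⟨C, forall_mem_image.2 hC⟩
  set S := sSup ((‖f ·‖) '' s)
  have hS : ∀ y ∈ s, ‖f y‖ ≤ S := fun y hy => le_csSup hbdd' (mem_image_of_mem _ hy)
  have hSq : S ≤ q * S := csSup_le (nonempty_of_mem (mem_image_of_mem _ hx))
    (forall_mem_image.2 (h S hS))
  have hS0 : S ≤ 0 := by nlinarith [(norm_nonneg (f x)).trans (hS x hx)]
  exact norm_le_zero_iff.1 ((hS x hx).trans hS0)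

lemma forall_of_forall_le_of_step {p : ℝ → Prop} {a δ : ℝ} (hδ : 0 < δ)
    (hbase : ∀ x ≤ a, p x) (hstep : ∀ c ≥ a, (∀ x ≤ c, p x) → ∀ x ≤ c + δ, p x) :
    ∀ x, p x := by
  have hn : ∀ n : ℕ, ∀ x ≤ a + n * δ, p x := by
    intro n
    induction n with
    | zero => simpa using hbase
    | succ n ih =>
      intro x hx
      exact hstep _ (by nlinarith [n.cast_nonneg (α := ℝ)]) ih x (by push_cast at hx; linarith)
  intro x
  obtain ⟨n, hn'⟩ := exists_nat_ge ((x - a) / δ)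
  exact hn n x (by rw [div_le_iff₀ hδ] at hn'; linarith)

lemma volterra_eq_zero_step {d : ℕ} {a b c δ ε : ℝ} {κ : ℝ → ℝ → Matrix (Fin d) (Fin d) ℂ}
    {z : ℝ → EuclideanSpace ℂ (Fin d)}
    (hκfin : ∀ t ∈ Icc a b, BoundedVariationOn (κ t) (Icc a t))
    (hκsmall : ∀ t ∈ Icc a b ∩ Ioc c (c + δ), (eVariationOn (κ t) (Ico c t)).toReal ≤ ε)
    (hε : 8 * d ^ 2 * ε < 1) (hzbdd : ∃ C : ℝ, ∀ t ∈ Icc a b, ‖z t‖ ≤ C)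
    (hzeq : ∀ t ∈ Icc a b, z t = toEuc (lsIntIooMV (κ t) a t (fun τ => z τ)))
    (hac : a ≤ c) (hc : ∀ x ≤ c, x ∈ Icc a b → z x = 0) :
    ∀ x ≤ c + δ, x ∈ Icc a b → z x = 0 := by
  intro x hx hxab
  rcases le_or_gt x c with hxc | hcx
  · exact hc x hxc hxab
  refine eq_zero_of_forall_norm_le_mul_bound (s := Icc a b ∩ Ioc c (c + δ)) hε
    (hzbdd.imp fun C hC t ht => hC t ht.1) (fun S hS t ht => ?_) x ⟨hxab, hcx, hx⟩
  obtain ⟨⟨hat, htb⟩, hct, htδ⟩ := ht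
  have hS0 : 0 ≤ S := (norm_nonneg _).trans (hS t ⟨⟨hat, htb⟩, hct, htδ⟩)
  rw [hzeq t ⟨hat, htb⟩]
  calc _ ≤ 8 * d ^ 2 * S * (eVariationOn (κ t) (Ico c t)).toReal :=
        norm_lsIntIooMV_le (κ t) z hac hct (hκfin t ⟨hat, htb⟩)
          (fun τ hτ => hc τ hτ.2 ⟨hτ.1.le, hτ.2.trans (hct.le.trans htb)⟩)
          (fun τ hτ => hS τ ⟨⟨hac.trans hτ.1.le, hτ.2.le.trans htb⟩, hτ.1, hτ.2.le.trans htδ⟩) hS0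
    _ ≤ 8 * d ^ 2 * ε * S := by
        rw [mul_right_comm _ ε]
        gcongr
        exact hκsmall t ⟨⟨hat, htb⟩, hct, htδ⟩

theorem homogeneous_volterra_trivial_general
    (d : ℕ) (a b : ℝ)
    (κ : ℝ → ℝ → Matrix (Fin d) (Fin d) ℂ) (hκ : IsSVKernel d a b κ)
    (z : ℝ → EuclideanSpace ℂ (Fin d))
    (hzbdd : ∃ C : ℝ, ∀ t ∈ Icc a b, ‖z t‖ ≤ C)
    (hzeq : ∀ t ∈ Icc a b, z t = toEuc (lsIntIooMV (κ t) a t (fun τ => z τ))) :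
    ∀ t ∈ Icc a b, z t = 0 := by
  obtain ⟨-, -, -, ⟨C, hκC⟩, hκsmall⟩ := hκ
  have hκfin : ∀ t ∈ Icc a b, BoundedVariationOn (κ t) (Icc a t) := fun t ht =>
    ne_top_of_le_ne_top ENNReal.ofReal_ne_top
      ((eVariationOn.mono _ (Icc_subset_Icc_right ht.2)).trans (hκC t ht))
  set ε : ℝ := (8 * d ^ 2 + 1)⁻¹
  have hε : 8 * d ^ 2 * ε < 1 := by
    rw [← div_eq_mul_inv, div_lt_one (by positivity)]; linarith
  obtain ⟨η, hη, hη_small⟩ := hκsmall ε (by positivity)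
  have hbase : ∀ x ≤ a, x ∈ Icc a b → z x = 0 := fun x hxa hx => by
    obtain rfl := le_antisymm hxa hx.1
    rw [hzeq x hx, lsIntIooMV_self]
    rfl
  refine forall_of_forall_le_of_step (half_pos hη) hbase fun c hac hc =>
    volterra_eq_zero_step hκfin (fun t ht => ?_) hε hzbdd hzeq hac hc
  obtain ⟨⟨hat, htb⟩, hct, htη⟩ := ht
  exact (ENNReal.toReal_lt_of_lt_ofReal (hη_small t ⟨hat, htb⟩ c ⟨hac, hct.le.trans htb⟩
    (sub_pos.2 hct) (by linarith))).le

/-- **Uniqueness for the homogeneous Stieltjes–Volterra equation.**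

If `κ` is a Stieltjes–Volterra kernel of type `B^∞` on `[a,b] × [a,b]` and
`z : [a,b] → ℂ^d` is bounded and measurable with
`z t = ∫_{(a,t)} dκ(t,τ) z(τ)` for all `a ≤ t ≤ b`
(the integral being over the open interval `(a,t)`), then `z ≡ 0` on `[a,b]`. -/
theorem homogeneous_volterra_trivial
    (d : ℕ) (hd : 0 < d) (a b : ℝ) (hab : a < b)
    (κ : ℝ → ℝ → Matrix (Fin d) (Fin d) ℂ) (hκ : IsSVKernel d a b κ)
    (z : ℝ → EuclideanSpace ℂ (Fin d))
    (hzmeas : Measurable ((Icc a b).restrict z))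
    (hzbdd : ∃ C : ℝ, ∀ t ∈ Icc a b, ‖z t‖ ≤ C)
    (hzeq : ∀ t ∈ Icc a b, z t = toEuc (lsIntIooMV (κ t) a t (fun τ => z τ))) :
    ∀ t ∈ Icc a b, z t = 0 :=
  homogeneous_volterra_trivial_general d a b κ hκ z hzbdd hzeq
end
end

section
/- Fix s ∈ ℝ. Suppose φ : [−τ_N, 0] → ℂ^d is continuous and of bounded variation, and each D_j is continuous and of bounded variation on [s, s+τ_N]. Then the function f : [s, s+τ_N] → ℂ^d defined by f(t) := Σ_{ℓ : t−s < τ_ℓ ≤ τ_N} D_ℓ(t) φ(t − s − τ_ℓ) is right-continuous and of bounded variation on [s, s+τ_N], i.e. f ∈ BV_r([s, s+τ_N]). -/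
open MeasureTheory Set
open scoped ENNReal NNReal
open scoped Matrix.Norms.L2Operator

noncomputable section

/-!
Each summand is the product of the indicator of `t < s + τ_ℓ`, which is antitone and
right-continuous, with `D_ℓ(t) φ(min (t - s - τ_ℓ) 0)`. Clamping the delayed argument at `0`
leaves the summand unchanged, but makes this second factor continuous and of bounded variation
on the whole interval, because a monotone reparametrisation does not increase variation.
Products through a continuous bilinear map and finite sums of right-continuous functions of
bounded variation are again of this kind.
-/

section BoundedVariation

variable {α : Type*} [LinearOrder α] {E : Type*} [SeminormedAddCommGroup E] {s : Set α}

theorem eVariationOn_add_le (f g : α → E) :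
    eVariationOn (fun x => f x + g x) s ≤ eVariationOn f s + eVariationOn g s := by
  refine iSup_le fun ⟨n, u, hu, us⟩ => ?_
  calc ∑ i ∈ Finset.range n, edist (f (u (i + 1)) + g (u (i + 1))) (f (u i) + g (u i))
      ≤ ∑ i ∈ Finset.range n,
          (edist (f (u (i + 1))) (f (u i)) + edist (g (u (i + 1))) (g (u i))) :=
        Finset.sum_le_sum fun i _ => edist_add_add_le _ _ _ _
    _ = ∑ i ∈ Finset.range n, edist (f (u (i + 1))) (f (u i)) +
          ∑ i ∈ Finset.range n, edist (g (u (i + 1))) (g (u i)) := Finset.sum_add_distrib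
    _ ≤ eVariationOn f s + eVariationOn g s :=
        add_le_add (eVariationOn.sum_le (f := f) (n := n) hu us)
          (eVariationOn.sum_le (f := g) (n := n) hu us)

theorem BoundedVariationOn.add {f g : α → E} (hf : BoundedVariationOn f s)
    (hg : BoundedVariationOn g s) : BoundedVariationOn (fun x => f x + g x) s :=
  ne_top_of_le_ne_top (ENNReal.add_ne_top.2 ⟨hf, hg⟩) (eVariationOn_add_le f g)

theorem boundedVariationOn_const (c : E) : BoundedVariationOn (fun _ : α => c) s := by
  rw [BoundedVariationOn, eVariationOn.constant_on (by rintro _ ⟨_, _, rfl⟩ _ ⟨_, _, rfl⟩; rfl)]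
  exact ENNReal.zero_ne_top

theorem boundedVariationOn_finsetSum {ι : Type*} (t : Finset ι) {f : ι → α → E}
    (h : ∀ i ∈ t, BoundedVariationOn (f i) s) :
    BoundedVariationOn (fun x => ∑ i ∈ t, f i x) s := by
  classical
  induction t using Finset.induction_on with
  | empty => simpa using boundedVariationOn_const (0 : E)
  | insert i t hi ih =>
    simp only [Finset.sum_insert hi]
    exact (h i (t.mem_insert_self i)).add (ih fun j hj => h j (Finset.mem_insert_of_mem hj))

theorem AntitoneOn.boundedVariationOn {f : α → ℝ} {C : ℝ} (hf : AntitoneOn f s)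
    (h : ∀ x ∈ s, |f x| ≤ C) : BoundedVariationOn f s :=
  eVariationOn.boundedVariation_ofDual.1 (hf.dual_left.boundedVariationOn h)

theorem boundedVariationOn_ite_lt (c : α) :
    BoundedVariationOn (fun x => if x < c then (1 : ℝ) else 0) s := by
  refine AntitoneOn.boundedVariationOn (C := 1) (fun x _ y _ hxy => ?_) fun x _ => ?_
  · by_cases hy : y < c
    · simp [hy, hxy.trans_lt hy]
    · simp only [hy, if_false]; split_ifs <;> norm_num
  · split_ifs <;> norm_num

theorem continuousWithinAt_Ioi_ite_lt [TopologicalSpace α] [OrderTopology α] (c t : α) :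
    ContinuousWithinAt (fun x => if x < c then (1 : ℝ) else 0) (Ioi t) t := by
  by_cases htc : t < c
  · refine (continuousAt_const (y := (1 : ℝ))).congr ?_ |>.continuousWithinAt
    filter_upwards [Iio_mem_nhds htc] with x hx
    exact (if_pos (mem_Iio.1 hx)).symm
  · refine continuousWithinAt_const.congr (fun x hx => ?_) (if_neg htc)
    exact if_neg fun hxc => htc ((mem_Ioi.1 hx).trans hxc)

end BoundedVariation

section TruncatedDelay

variable {E F G : Type*} [NormedAddCommGroup E] [NormedSpace ℝ E] [NormedAddCommGroup F]
  [NormedSpace ℝ F] [NormedAddCommGroup G] [NormedSpace ℝ G]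
  (B : E →L[ℝ] F →L[ℝ] G) {f : ℝ → E} {g : ℝ → F} {a c : ℝ}

def truncatedDelay (f : ℝ → E) (g : ℝ → F) (c : ℝ) : ℝ → G :=
  fun t => if t < c then B (f t) (g (t - c)) else 0

theorem truncatedDelay_eq_smul (f : ℝ → E) (g : ℝ → F) (c : ℝ) :
    truncatedDelay B f g c =
      fun t => (if t < c then (1 : ℝ) else 0) • B (f t) (g (min (t - c) 0)) := by
  funext t
  by_cases htc : t < c
  · simp [truncatedDelay, htc, min_eq_left (sub_nonpos.2 htc.le)]
  · simp [truncatedDelay, htc]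

theorem mapsTo_min_sub_zero (hac : a ≤ c) :
    MapsTo (fun t => min (t - c) 0) (Ici a) (Icc (a - c) 0) :=
  fun _ ht => ⟨le_min (sub_le_sub_right ht c) (sub_nonpos.2 hac), min_le_right _ _⟩

theorem boundedVariationOn_truncatedDelay {b : ℝ} (hac : a ≤ c)
    (hf : BoundedVariationOn f (Icc a b)) (hg : BoundedVariationOn g (Icc (a - c) 0)) :
    BoundedVariationOn (truncatedDelay B f g c) (Icc a b) := by
  have hclamp : Monotone fun t : ℝ => min (t - c) 0 :=
    fun _ _ h => min_le_min_right 0 (sub_le_sub_right h c)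
  have hg' : BoundedVariationOn (fun t => g (min (t - c) 0)) (Icc a b) :=
    ne_top_of_le_ne_top hg <| eVariationOn.comp_le_of_monotoneOn g _ (hclamp.monotoneOn _)
      ((mapsTo_min_sub_zero hac).mono_left Icc_subset_Ici_self)
  rw [truncatedDelay_eq_smul]
  exact (boundedVariationOn_ite_lt c).smul (hf.bilinear_comp hg' B)

theorem continuousWithinAt_truncatedDelay {t : ℝ} (hac : a ≤ c) (hat : a ≤ t)
    (hf : ContinuousWithinAt f (Ioi t) t) (hg : ContinuousOn g (Icc (a - c) 0)) :
    ContinuousWithinAt (truncatedDelay B f g c) (Ioi t) t := by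
  have hclamp : ContinuousWithinAt (fun x => min (x - c) 0) (Ioi t) t := by fun_prop
  have hg' : ContinuousWithinAt (fun x => g (min (x - c) 0)) (Ioi t) t :=
    (hg _ (mapsTo_min_sub_zero hac hat)).comp (f := fun x => min (x - c) 0) hclamp
      ((mapsTo_min_sub_zero hac).mono_left (Ioi_subset_Ici hat))
  rw [truncatedDelay_eq_smul]
  exact (continuousWithinAt_Ioi_ite_lt c t).smul
    ((B.continuous.continuousAt.comp_continuousWithinAt hf).clm_apply hg')

end TruncatedDelay

theorem Matrix.isometry_toEuclideanCLM {d : ℕ} :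
    Isometry (Matrix.toEuclideanCLM (n := Fin d) (𝕜 := ℂ)) :=
  Isometry.of_dist_eq fun _ _ => rfl

theorem forcing_term_right_continuous_bounded_variation_general
    (d N : ℕ)
    (τ : Fin (N + 1) → ℝ) (hτpos : ∀ j, 0 < τ j) (hτmono : StrictMono τ)
    (D : Fin (N + 1) → ℝ → Matrix (Fin d) (Fin d) ℂ) (hD : ∀ j, Continuous (D j))
    (s : ℝ)
    (hDbv : ∀ j, BoundedVariationOn (D j) (Icc s (s + τ (Fin.last N))))
    (φ : ℝ → EuclideanSpace ℂ (Fin d))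
    (hφcont : ContinuousOn φ (Icc (-(τ (Fin.last N))) 0))
    (hφbv : BoundedVariationOn φ (Icc (-(τ (Fin.last N))) 0))
    (f : ℝ → EuclideanSpace ℂ (Fin d))
    (hf : f = fun t => ∑ ℓ, if t - s < τ ℓ then
      toEuc ((D ℓ t).mulVec (φ (t - s - τ ℓ))) else 0) :
    (∀ t ∈ Icc s (s + τ (Fin.last N)), ContinuousWithinAt f (Ioi t) t) ∧
    BoundedVariationOn f (Icc s (s + τ (Fin.last N))) := by
  let V := EuclideanSpace ℂ (Fin d)
  let A : Fin (N + 1) → ℝ → V →L[ℂ] V := fun ℓ t =>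
    Matrix.toEuclideanCLM (n := Fin d) (𝕜 := ℂ) (D ℓ t)
  -- `B` evaluates a `ℂ`-linear operator as an `ℝ`-linear one, so `B (A ℓ t) v` is
  -- definitionally `toEuc ((D ℓ t).mulVec v)`.
  let B := ContinuousLinearMap.restrictScalarsL ℂ V V ℝ ℝ
  have hf_eq : f = fun t => ∑ ℓ, truncatedDelay B (A ℓ) φ (s + τ ℓ) t := by
    subst hf
    funext t
    refine Finset.sum_congr rfl fun ℓ _ => ?_
    simp only [truncatedDelay, sub_lt_iff_lt_add', sub_sub]
    rfl
  have hsc : ∀ ℓ, s ≤ s + τ ℓ := fun ℓ => le_add_of_nonneg_right (hτpos ℓ).le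
  have hφdom : ∀ ℓ, Icc (s - (s + τ ℓ)) 0 ⊆ Icc (-τ (Fin.last N)) 0 := fun ℓ =>
    Icc_subset_Icc_left (by linarith [hτmono.monotone (Fin.le_last ℓ)])
  subst hf_eq
  refine ⟨fun t ht => tendsto_finsetSum _ fun ℓ _ => ?_,
    boundedVariationOn_finsetSum _ fun ℓ _ => ?_⟩
  · exact continuousWithinAt_truncatedDelay B (hsc ℓ) ht.1
      ((Matrix.isometry_toEuclideanCLM.continuous.comp (hD ℓ)).continuousWithinAt)
      (hφcont.mono (hφdom ℓ))
  · exact boundedVariationOn_truncatedDelay B (hsc ℓ)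
      (Matrix.isometry_toEuclideanCLM.lipschitz.comp_boundedVariationOn (hDbv ℓ))
      (hφbv.mono (hφdom ℓ))

/-- **The forcing term built from the initial data is right-continuous and of
bounded variation.**

If `φ` is continuous and of bounded variation on `[-τ_N, 0]` and each `D_j` is
continuous and of bounded variation on `[s, s+τ_N]`, then
`f(t) = ∑_{ℓ : t-s < τ_ℓ ≤ τ_N} D_ℓ(t) φ(t - s - τ_ℓ)` belongs to
`BV_r([s, s+τ_N])`. -/
theorem forcing_term_right_continuous_bounded_variation
    (d N : ℕ) (hd : 0 < d)
    (τ : Fin (N + 1) → ℝ) (hτpos : ∀ j, 0 < τ j) (hτmono : StrictMono τ)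
    (D : Fin (N + 1) → ℝ → Matrix (Fin d) (Fin d) ℂ) (hD : ∀ j, Continuous (D j))
    (s : ℝ)
    (hDbv : ∀ j, BoundedVariationOn (D j) (Icc s (s + τ (Fin.last N))))
    (φ : ℝ → EuclideanSpace ℂ (Fin d))
    (hφcont : ContinuousOn φ (Icc (-(τ (Fin.last N))) 0))
    (hφbv : BoundedVariationOn φ (Icc (-(τ (Fin.last N))) 0))
    (f : ℝ → EuclideanSpace ℂ (Fin d))
    (hf : f = fun t => ∑ ℓ, if t - s < τ ℓ then
      toEuc ((D ℓ t).mulVec (φ (t - s - τ ℓ))) else 0) :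
    (∀ t ∈ Icc s (s + τ (Fin.last N)), ContinuousWithinAt f (Ioi t) t) ∧
    BoundedVariationOn f (Icc s (s + τ (Fin.last N))) :=
  forcing_term_right_continuous_bounded_variation_general d N τ hτpos hτmono D hD s hDbv φ hφcont
    hφbv f hf
end
end
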